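/- arXiv:0912.0684 — 8 statements merged into one kernel-verified Lean document; each statement's English description precedes it below -/
import Mathlib

section
/- Let $a, b, c$ be complex numbers and let $M_n(a,b,c)$ be the $n \times n$ matrix with entries $m'_{ij} = \prod_{s=1}^{i-1} \frac{a(s+j)+b}{s+j+c}$ for $1 \le i,j \le n$ (where the empty product for $i=1$ equals $1$). Then, assuming all denominators are nonzero, $\det M_n(a,b,c) = \frac{(n-1)!\,(ac-b)^{n-1}}{\prod_{i=1}^{n-1}(i+1+c)(i+2+c)} \cdot \det M_{n-1}(a, a+b, c+2)$. -/
open Finset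

/-- The matrix `M n a b c` with `(i,j)` entry (1-based) `∏_{s=1}^{i-1} (a(s+j)+b)/(s+j+c)`. -/
noncomputable def Mmat (n : ℕ) (a b c : ℂ) : Matrix (Fin n) (Fin n) ℂ :=
  Matrix.of fun i j =>
    ∏ s ∈ Finset.Icc 1 (i : ℕ), (a * ((s : ℂ) + ((j : ℕ) + 1)) + b) / ((s : ℂ) + ((j : ℕ) + 1) + c)

/-!
Write `P_k(x) = ∏_{s=1}^k (a(s+x)+b)/(s+x+c)`, so that column `j` of `M_n(a,b,c)` is
`(P_k(j+1))_k`. Since `P_{k+1}(x) - a P_k(x) = (b - ac) P_k(x)/(k+1+x+c)`, subtracting `a` times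
each row from the next, and then each column from the previous one, turns the first row into the
last unit vector and leaves a minor with entries `(b - ac) (P_k(x)/(k+1+x+c) - P_k(x+1)/(k+2+x+c))`.
The numerators of `P_k(x+1)` and of the product `Q_k(x)` for `(a, a+b, c+2)` agree while the
quotient of their denominators telescopes, so this difference is
`(b - ac) ((k+1) Q_k(x) - k a Q_{k-1}(x)) / ((x+1+c)(x+2+c))`: the minor is a lower bidiagonal
matrix of determinant `(n-1)!` times `M_{n-1}(a, a+b, c+2)` times a diagonal matrix.
-/

open Matrix

namespace Matrix

variable {R ι : Type*} (n : ℕ) (d e : ℕ → R)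

/-- The subdiagonal is indexed by the row: the entry at `(i, i - 1)` is `e i`. -/
def lowerBidiag [Zero R] : Matrix (Fin n) (Fin n) R :=
  of fun i t => if i = t then d i else if (t : ℕ) + 1 = i then e i else 0

theorem lowerBidiag_isLowerTriangular [Zero R] : (lowerBidiag n d e).IsLowerTriangular := by
  intro i t (hit : i < t)
  simp only [lowerBidiag, of_apply, hit.ne, if_false]
  rw [if_neg (by omega)]

theorem det_lowerBidiag [CommRing R] : (lowerBidiag n d e).det = ∏ i : Fin n, d i := by
  rw [det_of_isLowerTriangular _ (lowerBidiag_isLowerTriangular n d e)]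
  simp [lowerBidiag]

section Semiring

variable [Semiring R]

theorem lowerBidiag_mul_apply_zero (A : Matrix (Fin (n + 1)) ι R) (j : ι) :
    (lowerBidiag (n + 1) d e * A) 0 j = d 0 * A 0 j := by
  rw [mul_apply, Fintype.sum_eq_single 0 fun t ht => ?_]
  · simp [lowerBidiag]
  · simp [lowerBidiag, Ne.symm ht]

theorem lowerBidiag_mul_apply_succ (A : Matrix (Fin (n + 1)) ι R) (i : Fin n) (j : ι) :
    (lowerBidiag (n + 1) d e * A) i.succ j =
      d (i + 1) * A i.succ j + e (i + 1) * A i.castSucc j := by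
  have hi : i.succ ≠ i.castSucc := (Fin.castSucc_lt_succ (i := i)).ne'
  rw [mul_apply, Fintype.sum_eq_add i.succ i.castSucc hi fun t ht => ?_]
  · simp [lowerBidiag, hi]
  · have : (t : ℕ) ≠ i := fun h => ht.2 (Fin.ext h)
    simp [lowerBidiag, Ne.symm ht.1, this]

theorem mul_lowerBidiag_apply_castSucc (A : Matrix ι (Fin (n + 1)) R) (i : ι) (j : Fin n) :
    (A * lowerBidiag (n + 1) d e) i j.castSucc =
      A i j.castSucc * d j + A i j.succ * e (j + 1) := by
  have hj : j.castSucc ≠ j.succ := (Fin.castSucc_lt_succ (i := j)).ne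
  rw [mul_apply, Fintype.sum_eq_add j.castSucc j.succ hj fun t ht => ?_]
  · simp [lowerBidiag, hj.symm]
  · have : (j : ℕ) + 1 ≠ t := fun h => ht.2 (Fin.ext (by simpa using h.symm))
    simp [lowerBidiag, ht.1, this]

theorem mul_lowerBidiag_apply_last (A : Matrix ι (Fin (n + 1)) R) (i : ι) :
    (A * lowerBidiag (n + 1) d e) i (Fin.last n) = A i (Fin.last n) * d n := by
  rw [mul_apply, Fintype.sum_eq_single (Fin.last n) fun t ht => ?_]
  · simp [lowerBidiag]
  · have : n + 1 ≠ t := by omega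
    simp [lowerBidiag, ht, this]

end Semiring

theorem det_eq_neg_one_pow_mul_det_submatrix_of_row_zero [CommRing R] {m : ℕ}
    (A : Matrix (Fin (m + 1)) (Fin (m + 1)) R) (h0 : ∀ j : Fin m, A 0 j.castSucc = 0)
    (h1 : A 0 (Fin.last m) = 1) :
    A.det = (-1) ^ m * (A.submatrix Fin.succ Fin.castSucc).det := by
  rw [det_succ_row_zero, Fin.sum_univ_castSucc]
  simp [h0, h1, Fin.succAbove_last]

end Matrix

section PochRatio

variable {K : Type*} [Field K] (a b c : K)

noncomputable def pochRatio (x : K) (k : ℕ) : K :=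
  ∏ s ∈ Icc 1 k, (a * (s + x) + b) / (s + x + c)

@[simp]
theorem pochRatio_zero (x : K) : pochRatio a b c x 0 = 1 := by
  simp [pochRatio]

theorem pochRatio_succ (x : K) (k : ℕ) :
    pochRatio a b c x (k + 1) =
      pochRatio a b c x k * ((a * (k + 1 + x) + b) / (k + 1 + x + c)) := by
  rw [pochRatio, prod_Icc_succ_top (by omega), Nat.cast_succ, pochRatio]

theorem pochRatio_succ' (x : K) (k : ℕ) :
    pochRatio a b c x (k + 1) =
      (a * (1 + x) + b) / (1 + x + c) * pochRatio a b c (x + 1) k := by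
  induction k with
  | zero => simp [pochRatio_succ]
  | succ k ih =>
    rw [pochRatio_succ, ih, pochRatio_succ, mul_assoc]
    push_cast
    ring_nf

theorem pochRatio_succ_sub_mul (x : K) (k : ℕ) (hx : (k + 1 : K) + x + c ≠ 0) :
    pochRatio a b c x (k + 1) - a * pochRatio a b c x k =
      (b - a * c) * (pochRatio a b c x k / (k + 1 + x + c)) := by
  rw [pochRatio_succ]
  field_simp
  ring

theorem pochRatio_add_add_two (x : K) (k : ℕ)
    (hx : ∀ s ∈ Icc 2 (k + 2), (s : K) + x + c ≠ 0) :
    pochRatio a (a + b) (c + 2) x k * (k + 2 + x + c) =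
      pochRatio a b c (x + 1) k * (2 + x + c) := by
  induction k with
  | zero => simp
  | succ k ih =>
    have h2 : (k + 2 : K) + x + c ≠ 0 := by exact_mod_cast hx (k + 2) (by simp)
    have h3 : (k + 3 : K) + x + c ≠ 0 := by exact_mod_cast hx (k + 3) (by simp)
    have ih := ih fun s hs => hx s (Icc_subset_Icc_right (by omega) hs)
    rw [pochRatio_succ, pochRatio_succ, mul_right_comm _ _ (2 + x + c), ← ih, Nat.cast_succ,
      show (k : K) + 1 + x + (c + 2) = k + 3 + x + c by ring,
      show (k : K) + 1 + (x + 1) + c = k + 2 + x + c by ring]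
    field_simp
    ring

theorem pochRatio_div_sub_shift (x : K) (k : ℕ)
    (hx : ∀ s ∈ Icc 1 (k + 3), (s : K) + x + c ≠ 0) :
    pochRatio a b c x (k + 1) / (k + 2 + x + c) -
        pochRatio a b c (x + 1) (k + 1) / (k + 3 + x + c) =
      ((k + 2) * pochRatio a (a + b) (c + 2) x (k + 1) -
          (k + 1) * a * pochRatio a (a + b) (c + 2) x k) / ((1 + x + c) * (2 + x + c)) := by
  have h1 : 1 + x + c ≠ 0 := by simpa using hx 1 (by simp)
  have h2 : 2 + x + c ≠ 0 := by exact_mod_cast hx 2 (by simp)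
  have hk2 : (k + 2 : K) + x + c ≠ 0 := by exact_mod_cast hx (k + 2) (by simp)
  have hk3 : (k + 3 : K) + x + c ≠ 0 := by exact_mod_cast hx (k + 3) (by simp)
  have hQ := pochRatio_add_add_two a b c x k fun s hs =>
    hx s (Icc_subset_Icc (by omega) (by omega) hs)
  have hR : pochRatio a b c (x + 1) k =
      pochRatio a (a + b) (c + 2) x k * (k + 2 + x + c) / (2 + x + c) := by
    rw [hQ, mul_div_cancel_right₀ _ h2]
  rw [pochRatio_succ' a b c x, pochRatio_succ a b c (x + 1), pochRatio_succ a (a + b) (c + 2), hR,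
    show (k : K) + 1 + x + (c + 2) = k + 3 + x + c by ring,
    show (k : K) + 1 + (x + 1) + c = k + 2 + x + c by ring]
  field_simp
  ring

end PochRatio

theorem Mmat_apply (n : ℕ) (a b c : ℂ) (i j : Fin n) :
    Mmat n a b c i j = pochRatio a b c ((j : ℕ) + 1) i :=
  rfl

/-- Subtract `a` times each row from the next one, then each column from the previous one. -/
noncomputable def MmatReduced (m : ℕ) (a b c : ℂ) : Matrix (Fin (m + 1)) (Fin (m + 1)) ℂ :=
  lowerBidiag (m + 1) 1 (fun _ => -a) * Mmat (m + 1) a b c * lowerBidiag (m + 1) 1 (fun _ => -1)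

section MmatReduced

variable (m : ℕ) (a b c : ℂ)

theorem MmatReduced_apply_zero_castSucc (j : Fin m) : MmatReduced m a b c 0 j.castSucc = 0 := by
  simp [MmatReduced, mul_lowerBidiag_apply_castSucc, lowerBidiag_mul_apply_zero, Mmat_apply]

theorem MmatReduced_apply_zero_last : MmatReduced m a b c 0 (Fin.last m) = 1 := by
  simp [MmatReduced, mul_lowerBidiag_apply_last, lowerBidiag_mul_apply_zero, Mmat_apply]

theorem MmatReduced_apply_succ_castSucc (k j : Fin m)
    (h1 : (k + 1 : ℂ) + (j + 1) + c ≠ 0) (h2 : (k + 1 : ℂ) + (j + 1 + 1) + c ≠ 0) :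
    MmatReduced m a b c k.succ j.castSucc =
      (b - a * c) * (pochRatio a b c (j + 1) k / (k + 1 + (j + 1) + c) -
        pochRatio a b c (j + 1 + 1) k / (k + 1 + (j + 1 + 1) + c)) := by
  simp only [MmatReduced, mul_lowerBidiag_apply_castSucc, lowerBidiag_mul_apply_succ, Mmat_apply,
    Fin.val_succ, Fin.val_castSucc, Pi.one_apply, Nat.cast_succ]
  rw [mul_sub, ← pochRatio_succ_sub_mul _ _ _ _ _ h1, ← pochRatio_succ_sub_mul _ _ _ _ _ h2]
  ring

end MmatReduced

theorem MmatReduced_submatrix (m : ℕ) (a b c : ℂ)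
    (hc : ∀ u ∈ Icc 2 (2 * m + 1), (u : ℂ) + c ≠ 0) :
    (MmatReduced m a b c).submatrix Fin.succ Fin.castSucc =
      lowerBidiag m (fun k => (k + 1 : ℂ)) (fun k => -(k * a)) *
        (Mmat m a (a + b) (c + 2) *
          diagonal fun j : Fin m => (b - a * c) / ((j + 2 + c) * (j + 3 + c))) := by
  cases m with
  | zero => ext k; exact k.elim0
  | succ m =>
  ext k j
  have hx : ∀ s ∈ Icc 1 ((k : ℕ) + 2), (s : ℂ) + ((j : ℕ) + 1) + c ≠ 0 := by
    intro s hs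
    convert hc (s + j + 1) (by simp only [mem_Icc] at hs ⊢; omega) using 1
    push_cast
    ring
  rw [submatrix_apply, MmatReduced_apply_succ_castSucc _ _ _ _ _ _
    (by exact_mod_cast hx (k + 1) (by simp))
    (by convert hx (k + 2) (by simp) using 1; push_cast; ring)]
  cases k using Fin.cases with
  | zero =>
    have h2 : ((j : ℕ) : ℂ) + 2 + c ≠ 0 := by convert hx 1 (by simp) using 1; push_cast; ring
    have h3 : ((j : ℕ) : ℂ) + 3 + c ≠ 0 := by convert hx 2 (by simp) using 1; push_cast; ring
    simp only [lowerBidiag_mul_apply_zero, mul_diagonal, Mmat_apply, Fin.val_zero, pochRatio_zero,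
      Nat.cast_zero]
    rw [show (0 + 1 : ℂ) + (j + 1) + c = j + 2 + c by ring,
      show (0 + 1 : ℂ) + (j + 1 + 1) + c = j + 3 + c by ring]
    field_simp
    ring
  | succ k =>
    rw [lowerBidiag_mul_apply_succ]
    simp only [mul_diagonal, Mmat_apply, Fin.val_succ, Fin.val_castSucc]
    have key := pochRatio_div_sub_shift a b c ((j : ℕ) + 1) k (by simpa using hx)
    push_cast
    linear_combination (b - a * c) * key

theorem stmt0_general (n : ℕ) (a b c : ℂ)
    (hden : ∀ s j : ℕ, 1 ≤ s → s ≤ n - 1 → 1 ≤ j → j ≤ n → (s : ℂ) + j + c ≠ 0) :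
    (Mmat n a b c).det =
      ((n - 1).factorial : ℂ) * (a * c - b) ^ (n - 1) /
          (∏ i ∈ Finset.Icc 1 (n - 1), (((i : ℂ) + 1 + c) * ((i : ℂ) + 2 + c))) *
        (Mmat (n - 1) a (a + b) (c + 2)).det := by
  cases n with
  | zero => simp
  | succ m =>
  simp only [Nat.add_sub_cancel] at hden ⊢
  change _ = _ * (Mmat m a (a + b) (c + 2)).det
  have hc : ∀ u ∈ Icc 2 (2 * m + 1), (u : ℂ) + c ≠ 0 := by
    intro u hu
    rw [mem_Icc] at hu
    have h := hden (u - min (u - 1) (m + 1)) (min (u - 1) (m + 1)) (by omega) (by omega) (by omega)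
      (by omega)
    rwa [← Nat.cast_add, Nat.sub_add_cancel (by omega)] at h
  have hreduce : (Mmat (m + 1) a b c).det = (MmatReduced m a b c).det := by
    simp [MmatReduced, det_mul, det_lowerBidiag]
  have hfactorial : ∏ k : Fin m, ((k : ℕ) + 1 : ℂ) = m.factorial := by
    rw [Fin.prod_univ_eq_prod_range (fun k => (k + 1 : ℂ)), ← prod_range_add_one_eq_factorial]
    push_cast
    rfl
  have hscaling : ∏ j : Fin m, (b - a * c) / ((((j : ℕ) : ℂ) + 2 + c) * ((j : ℕ) + 3 + c)) =
      (b - a * c) ^ m / ∏ i ∈ Icc 1 m, (((i : ℂ) + 1 + c) * ((i : ℂ) + 2 + c)) := by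
    rw [prod_div_distrib, prod_const, card_univ, Fintype.card_fin,
      Fin.prod_univ_eq_prod_range (fun j => ((j : ℂ) + 2 + c) * ((j : ℂ) + 3 + c)),
      ← Ico_add_one_right_eq_Icc, prod_Ico_eq_prod_range]
    push_cast
    ring_nf
  rw [hreduce, det_eq_neg_one_pow_mul_det_submatrix_of_row_zero _
      (MmatReduced_apply_zero_castSucc m a b c) (MmatReduced_apply_zero_last m a b c),
    MmatReduced_submatrix m a b c hc, det_mul, det_mul, det_lowerBidiag, det_diagonal, hfactorial,
    hscaling, ← neg_sub b, neg_pow (b - a * c)]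
  ring

theorem stmt0 (n : ℕ) (hn : 1 ≤ n) (a b c : ℂ)
    (hden : ∀ s j : ℕ, 1 ≤ s → s ≤ n - 1 → 1 ≤ j → j ≤ n → (s : ℂ) + j + c ≠ 0)
    (hden2 : ∀ i : ℕ, 1 ≤ i → i ≤ n - 1 → ((i : ℂ) + 1 + c ≠ 0 ∧ (i : ℂ) + 2 + c ≠ 0)) :
    (Mmat n a b c).det =
      ((n - 1).factorial : ℂ) * (a * c - b) ^ (n - 1) /
          (∏ i ∈ Finset.Icc 1 (n - 1), (((i : ℂ) + 1 + c) * ((i : ℂ) + 2 + c))) *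
        (Mmat (n - 1) a (a + b) (c + 2)).det :=
  stmt0_general n a b c hden
end

section
/- Let $a, b, c$ be complex numbers and let $M_n(a,b,c)$ be the $n \times n$ matrix with entries $m'_{ij} = \prod_{s=1}^{i-1} \frac{a(s+j)+b}{s+j+c}$. Then, assuming all denominators are nonzero, $\det M_n(a,b,c) = \frac{\prod_{i=1}^{n-1} i! \, [a(i-1)+ac-b]^{n-i}}{\prod_{i=1}^{n-1} [i+1+c]^i \, [2n-i+c]^i}$. -/
/-!
Multiplying column `j` of `M_n(a,b,c)` by `∏_{s=1}^{n-1} (s + j + c)` clears the denominators: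
the entry `(i, j)` becomes `P_i(j)`, where
`P_i(X) = ∏_{1≤s<i} (aX + as + b) · ∏_{i≤s<n} (X + s + c)` has degree `< n`.
So the scaled matrix is (coefficients of the `P_i`) times a Vandermonde matrix, and reflecting the
nodes `x ↦ -x - c` changes its determinant only by the sign `(-1)^(n choose 2)`. At the reflected
nodes `-s - c` the factors `X + s + c` make the matrix lower triangular once its last column is
moved to the front, and its diagonal is explicit. The column factors multiply to the denominator
of the formula.
-/

open Finset

open Polynomial
open scoped Matrix

theorem Finset.prod_Icc_one_eq_prod_range {M : Type*} [CommMonoid M] (f : ℕ → M) (m : ℕ) :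
    ∏ i ∈ Icc 1 m, f i = ∏ i ∈ range m, f (i + 1) := by
  rw [← Ico_add_one_right_eq_Icc, prod_Ico_eq_prod_range, Nat.add_sub_cancel]
  simp only [add_comm]

theorem Finset.prod_range_neg_one_pow {M : Type*} [CommMonoid M] [HasDistribNeg M] (n : ℕ) :
    ∏ k ∈ range n, (-1 : M) ^ k = (-1) ^ n.choose 2 := by
  rw [prod_pow_eq_pow_sum, sum_range_id, Nat.choose_two_right]

theorem Finset.prod_range_succ_prod_range_add {M : Type*} [CommMonoid M] (f : ℕ → M) (m : ℕ) :
    ∏ j ∈ range (m + 1), ∏ s ∈ range m, f (j + s) =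
      ∏ i ∈ range m, (f i * f (2 * m - 1 - i)) ^ (i + 1) := by
  induction m generalizing f with
  | zero => simp
  | succ m ih =>
    -- strip the row `j = 0` and the column `s = m`; what is left is the rectangle for `f (· + 1)`
    have hlhs : ∏ j ∈ range (m + 2), ∏ s ∈ range (m + 1), f (j + s) =
        (∏ j ∈ range (m + 1), ∏ s ∈ range m, f (j + s + 1)) *
          ((∏ j ∈ range (m + 1), f (m + 1 + j)) * ∏ s ∈ range (m + 1), f s) := by
      rw [prod_range_succ' _ (m + 1)]
      simp only [prod_range_succ _ m, prod_mul_distrib, zero_add, mul_assoc]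
      simp only [add_right_comm _ 1, add_comm _ m]
    have hreflect :
        ∏ j ∈ range m, f (m + 1 + j) = ∏ i ∈ range m, f (2 * m - 1 - i + 1) := by
      rw [← prod_range_reflect]
      exact prod_congr rfl fun i hi => by rw [mem_range] at hi; congr 1; omega
    have hshift : ∀ i ∈ range m, (f (i + 1) * f (2 * (m + 1) - 1 - (i + 1))) ^ (i + 1 + 1) =
        (f (i + 1) * f (2 * m - 1 - i + 1)) ^ (i + 1) * (f (i + 1) * f (2 * m - 1 - i + 1)) := by
      intro i hi
      rw [mem_range] at hi
      rw [pow_succ, show 2 * (m + 1) - 1 - (i + 1) = 2 * m - 1 - i + 1 by omega]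
    have hrhs : ∏ i ∈ range (m + 1), (f i * f (2 * (m + 1) - 1 - i)) ^ (i + 1) =
        (∏ i ∈ range m, (f (i + 1) * f (2 * m - 1 - i + 1)) ^ (i + 1)) *
          ((∏ j ∈ range (m + 1), f (m + 1 + j)) * ∏ s ∈ range (m + 1), f s) := by
      rw [prod_range_succ', prod_congr rfl hshift, prod_range_succ _ m, hreflect,
        prod_range_succ' f, prod_mul_distrib, prod_mul_distrib]
      simp only [zero_add, pow_one, mul_add, mul_one]
      rw [show 2 * m + 2 - 1 = m + 1 + m by omega]
      ac_rfl
    rw [hlhs, hrhs, ih (fun k => f (k + 1))]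

namespace Matrix

variable {R : Type*} [CommRing R] {n : ℕ}

theorem det_vandermonde_neg (v : Fin n → R) :
    (vandermonde (-v)).det = (-1) ^ n.choose 2 * (vandermonde v).det := by
  have h : vandermonde (-v) = vandermonde v * diagonal fun j : Fin n => (-1) ^ (j : ℕ) := by
    ext i j
    rw [mul_diagonal, vandermonde_apply, vandermonde_apply, Pi.neg_apply, neg_pow, mul_comm]
  rw [h, det_mul, det_diagonal, Fin.prod_univ_eq_prod_range (fun j => (-1 : R) ^ j),
    prod_range_neg_one_pow, mul_comm]

end Matrix

section EvalMatrix

variable {R : Type*} [CommRing R] {n : ℕ}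

noncomputable def evalMatrix (p : Fin n → R[X]) (v : Fin n → R) : Matrix (Fin n) (Fin n) R :=
  Matrix.of fun i j => (p i).eval (v j)

theorem evalMatrix_eq_mul_vandermonde_transpose (p : Fin n → R[X])
    (hp : ∀ i, (p i).natDegree < n) (v : Fin n → R) :
    evalMatrix p v = Matrix.of (fun i k : Fin n => (p i).coeff k) * (Matrix.vandermonde v)ᵀ := by
  ext i j
  rw [evalMatrix, Matrix.of_apply, eval_eq_sum_range' (hp i), Matrix.mul_apply,
    ← Fin.sum_univ_eq_sum_range (fun k => (p i).coeff k * v j ^ k)]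
  rfl

theorem det_evalMatrix_neg_sub (p : Fin n → R[X]) (hp : ∀ i, (p i).natDegree < n)
    (v : Fin n → R) (c : R) :
    (evalMatrix p fun j => -v j - c).det = (-1) ^ n.choose 2 * (evalMatrix p v).det := by
  rw [evalMatrix_eq_mul_vandermonde_transpose p hp,
    evalMatrix_eq_mul_vandermonde_transpose p hp, Matrix.det_mul, Matrix.det_mul,
    Matrix.det_transpose, Matrix.det_transpose, Matrix.det_vandermonde_sub (fun j => -v j) c,
    ← Pi.neg_def, Matrix.det_vandermonde_neg]
  ring

theorem det_evalMatrix_comp (p : Fin n → R[X]) (v : Fin n → R) (σ : Equiv.Perm (Fin n)) :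
    (evalMatrix p (v ∘ σ)).det = Equiv.Perm.sign σ * (evalMatrix p v).det :=
  Matrix.det_permute' σ (evalMatrix p v)

end EvalMatrix

section RowPoly

variable {R : Type*} [CommRing R] (a b c : R) (m : ℕ)

/-- The polynomial `P_{i+1}` of the header (rows are indexed from `0` here), with `m = n - 1`. -/
noncomputable def rowPoly (i : ℕ) : R[X] :=
  (∏ s ∈ range i, (C a * X + C (a * (s + 1) + b))) *
    ∏ t ∈ range (m - i), (X + C (i + t + 1 + c))

theorem natDegree_rowPoly_le {i : ℕ} (hi : i ≤ m) : (rowPoly a b c m i).natDegree ≤ m := by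
  have hfirst : (∏ s ∈ range i, (C a * X + C (a * (s + 1) + b))).natDegree ≤ i :=
    (natDegree_prod_le _ _).trans <|
      (sum_le_card_nsmul _ _ 1 fun _ _ => natDegree_linear_le).trans (by simp)
  have hsecond : (∏ t ∈ range (m - i), (X + C ((i : R) + t + 1 + c))).natDegree ≤ m - i :=
    (natDegree_prod_le _ _).trans <|
      (sum_le_card_nsmul _ _ 1 fun _ _ => natDegree_add_C.trans_le natDegree_X_le).trans (by simp)
  exact natDegree_mul_le.trans (by omega)

theorem eval_rowPoly (i : ℕ) (z : R) :
    (rowPoly a b c m i).eval z =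
      (∏ s ∈ range i, (a * z + (a * (s + 1) + b))) *
        ∏ t ∈ range (m - i), (z + (i + t + 1 + c)) := by
  simp [rowPoly, eval_prod]

theorem eval_rowPoly_neg_sub_eq_zero {i j : ℕ} (hij : i < j) (hjm : j ≤ m) :
    (rowPoly a b c m i).eval (-j - c) = 0 := by
  rw [eval_rowPoly]
  refine mul_eq_zero_of_right _ (prod_eq_zero (i := j - i - 1) (mem_range.2 (by omega)) ?_)
  rw [Nat.cast_sub (by omega), Nat.cast_sub (by omega)]
  push_cast
  ring

theorem eval_rowPoly_neg_sub_self (i : ℕ) :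
    (rowPoly a b c m i).eval (-i - c) =
      (-1) ^ i * (m - i).factorial * ∏ t ∈ range i, (a * t + a * c - b) := by
  have hfirst : ∏ s ∈ range i, (a * (-i - c) + (a * (s + 1) + b)) =
      (-1) ^ i * ∏ t ∈ range i, (a * t + a * c - b) :=
    calc ∏ s ∈ range i, (a * (-i - c) + (a * (s + 1) + b))
        = ∏ s ∈ range i, -(a * (i - 1 - s : ℕ) + a * c - b) := prod_congr rfl fun s hs => by
          rw [mem_range] at hs
          rw [Nat.cast_sub (by omega), Nat.cast_sub (by omega)]
          push_cast
          ring
      _ = (-1) ^ i * ∏ t ∈ range i, (a * t + a * c - b) := by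
          rw [prod_neg, card_range, prod_range_reflect (fun t => a * t + a * c - b)]
  have hsecond : ∏ t ∈ range (m - i), (-(i : R) - c + (i + t + 1 + c)) = (m - i).factorial := by
    rw [← prod_range_add_one_eq_factorial, Nat.cast_prod]
    exact prod_congr rfl fun t _ => by push_cast; ring
  rw [eval_rowPoly, hfirst, hsecond]
  ring

theorem eval_rowPoly_zero_neg_sub :
    (rowPoly a b c m 0).eval (-(m + 1) - c) = (-1) ^ m * m.factorial :=
  calc (rowPoly a b c m 0).eval (-(m + 1) - c)
      = ∏ t ∈ range m, -(((m - 1 - t : ℕ) + 1 : ℕ) : R) := by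
        rw [eval_rowPoly, range_zero, prod_empty, one_mul, Nat.sub_zero]
        refine prod_congr rfl fun t ht => ?_
        rw [mem_range] at ht
        rw [Nat.cast_add, Nat.cast_sub (by omega), Nat.cast_sub (by omega)]
        push_cast
        ring
    _ = (-1) ^ m * m.factorial := by
        rw [prod_neg, card_range, prod_range_reflect (fun t => ((t + 1 : ℕ) : R)),
          ← Nat.cast_prod, prod_range_add_one_eq_factorial]

theorem det_evalMatrix_rowPoly_cons_eq_prod_diag :
    (evalMatrix (fun i : Fin (m + 1) => rowPoly a b c m i)
        (Fin.cons (-(m + 1) - c) fun k : Fin m => -((k : R) + 1) - c)).det =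
      (-1) ^ m * m.factorial * ∏ k ∈ range m, ((-1) ^ (k + 1) * (m - (k + 1)).factorial *
        ∏ t ∈ range (k + 1), (a * t + a * c - b)) := by
  rw [Matrix.det_of_isLowerTriangular, ← Fin.prod_univ_eq_prod_range (fun k => (-1 : R) ^ (k + 1)
    * (m - (k + 1)).factorial * ∏ t ∈ range (k + 1), (a * t + a * c - b))]
  · rw [Fin.prod_univ_succ]
    simp only [evalMatrix, Matrix.of_apply, Fin.cons_zero, Fin.cons_succ, Fin.val_zero,
      Fin.val_succ]
    rw [eval_rowPoly_zero_neg_sub]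
    congr 1
    refine Fintype.prod_congr _ _ fun k => ?_
    rw [← eval_rowPoly_neg_sub_self]
    push_cast
    rfl
  · intro i j hij
    cases j using Fin.cases with
    | zero => exact absurd hij (Fin.not_lt_zero i)
    | succ k =>
      have hik : (i : ℕ) < k + 1 := by simpa [Fin.lt_def] using hij
      simpa [evalMatrix] using eval_rowPoly_neg_sub_eq_zero a b c m hik k.is_lt

theorem det_evalMatrix_rowPoly_cons :
    (evalMatrix (fun i : Fin (m + 1) => rowPoly a b c m i)
        (Fin.cons (-(m + 1) - c) fun k : Fin m => -((k : R) + 1) - c)).det =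
      (-1) ^ (m + (m + 1).choose 2) *
        ∏ i ∈ range m, ((i + 1).factorial * (a * i + a * c - b) ^ (m - i)) := by
  set g : ℕ → R := fun t => a * t + a * c - b
  have hsign : ∏ k ∈ range m, (-1 : R) ^ (k + 1) = (-1) ^ (m + 1).choose 2 := by
    rw [← prod_range_neg_one_pow (M := R), prod_range_succ', pow_zero, mul_one]
  have hfactorial : (m.factorial : R) * ∏ k ∈ range m, ((m - (k + 1)).factorial : R) =
      ∏ i ∈ range m, ((i + 1).factorial : R) := by
    have hreflect : ∏ k ∈ range m, (m - (k + 1)).factorial = ∏ k ∈ range m, k.factorial :=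
      (prod_congr rfl fun k _ => by rw [Nat.sub_sub, add_comm]).trans (prod_range_reflect _ m)
    rw [← Nat.cast_prod, ← Nat.cast_prod, ← Nat.cast_mul, hreflect, mul_comm,
      ← prod_range_succ, Nat.prod_range_succ_factorial, Nat.prod_range_factorial_succ]
  have hpow :
      ∏ k ∈ range m, ∏ t ∈ range (k + 1), g t = ∏ t ∈ range m, g t ^ (m - t) := by
    rw [prod_range_diag_flip m fun t _ => g t]
    simp
  rw [det_evalMatrix_rowPoly_cons_eq_prod_diag, prod_mul_distrib, prod_mul_distrib,
    prod_mul_distrib, hsign, hpow, ← hfactorial, pow_add]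
  ring

theorem det_evalMatrix_rowPoly :
    (evalMatrix (fun i : Fin (m + 1) => rowPoly a b c m i) fun j => (j : R) + 1).det =
      ∏ i ∈ range m, ((i + 1).factorial * (a * i + a * c - b) ^ (m - i)) := by
  have hdeg (i : Fin (m + 1)) : (rowPoly a b c m i).natDegree < m + 1 :=
    Nat.lt_succ_of_le (natDegree_rowPoly_le a b c m (Nat.lt_succ_iff.1 i.is_lt))
  have hreflect := det_evalMatrix_neg_sub _ hdeg (fun j => (j : R) + 1) c
  have hnodes : (fun j : Fin (m + 1) => -((j : R) + 1) - c) =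
      (Fin.cons (-(m + 1) - c) fun k : Fin m => -((k : R) + 1) - c) ∘ finRotate (m + 1) := by
    funext j
    cases j using Fin.lastCases <;> simp
  have hrotate := det_evalMatrix_comp (fun i : Fin (m + 1) => rowPoly a b c m i)
    (Fin.cons (-(m + 1) - c) fun k : Fin m => -((k : R) + 1) - c) (finRotate (m + 1))
  rw [← hnodes, sign_finRotate, Nat.add_sub_cancel, det_evalMatrix_rowPoly_cons] at hrotate
  set N := (m + 1).choose 2
  calc _ = (-1) ^ (N + N) * (evalMatrix (fun i : Fin (m + 1) => rowPoly a b c m i)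
          fun j => (j : R) + 1).det := by
        rw [Even.neg_one_pow ⟨N, rfl⟩, one_mul]
    _ = (-1) ^ (N + m + (m + N)) *
          ∏ i ∈ range m, ((i + 1).factorial * (a * i + a * c - b) ^ (m - i)) := by
        rw [pow_add, mul_assoc, ← hreflect, hrotate]
        push_cast
        ring
    _ = _ := by rw [Even.neg_one_pow ⟨N + m, by ring⟩, one_mul]

end RowPoly

section ColFactor

variable {R : Type*} [CommRing R] (c : R) (m : ℕ)

def colFactor (j : ℕ) : R :=
  ∏ s ∈ range m, (((j + s : ℕ) : R) + 2 + c)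

theorem prod_colFactor :
    ∏ j : Fin (m + 1), colFactor c m j =
      ∏ i ∈ Icc 1 m, ((i : R) + 1 + c) ^ i * (2 * ((m + 1 : ℕ) : R) - i + c) ^ i := by
  rw [Fin.prod_univ_eq_prod_range (colFactor c m)]
  unfold colFactor
  rw [prod_range_succ_prod_range_add (fun k => (k : R) + 2 + c), prod_Icc_one_eq_prod_range]
  refine prod_congr rfl fun i hi => ?_
  rw [mem_range] at hi
  rw [← mul_pow, Nat.cast_sub (by omega), Nat.cast_sub (by omega)]
  push_cast
  ring

end ColFactor

theorem colFactor_mul_Mmat_apply (a b c : ℂ) (m : ℕ) (i j : Fin (m + 1))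
    (hden : ∀ s < m, (((j : ℕ) + s : ℕ) : ℂ) + 2 + c ≠ 0) :
    colFactor c m j * Mmat (m + 1) a b c i j = (rowPoly a b c m i).eval ((j : ℂ) + 1) := by
  set den : ℕ → ℂ := fun s => (((j : ℕ) + s : ℕ) : ℂ) + 2 + c
  have hi : (i : ℕ) ≤ m := Nat.lt_succ_iff.1 i.is_lt
  have hsplit : ∏ s ∈ range m, den s =
      (∏ s ∈ range i, den s) * ∏ t ∈ range (m - i), den (i + t) := by
    rw [← prod_range_add, Nat.add_sub_cancel' hi]
  have hnum : ∏ s ∈ range i, (a * (((s + 1 : ℕ) : ℂ) + ((j : ℕ) + 1)) + b) =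
      ∏ s ∈ range i, (a * ((j : ℂ) + 1) + (a * (s + 1) + b)) :=
    prod_congr rfl fun s _ => by push_cast; ring
  have hden' :
      ∏ s ∈ range i, (((s + 1 : ℕ) : ℂ) + ((j : ℕ) + 1) + c) = ∏ s ∈ range i, den s :=
    prod_congr rfl fun s _ => by simp only [den]; push_cast; ring
  have htail : ∏ t ∈ range (m - i), den (i + t) =
      ∏ t ∈ range (m - i), ((j : ℂ) + 1 + (i + t + 1 + c)) :=
    prod_congr rfl fun t _ => by simp only [den]; push_cast; ring
  have hne : ∏ s ∈ range i, den s ≠ 0 :=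
    prod_ne_zero_iff.2 fun s hs => hden s (by rw [mem_range] at hs; omega)
  rw [colFactor, Mmat, Matrix.of_apply, prod_Icc_one_eq_prod_range, prod_div_distrib, hnum,
    hden', hsplit, htail, eval_rowPoly]
  field_simp

theorem stmt1_general (n : ℕ) (a b c : ℂ)
    (hden : ∀ s j : ℕ, 1 ≤ s → s ≤ n - 1 → 1 ≤ j → j ≤ n → (s : ℂ) + j + c ≠ 0) :
    (Mmat n a b c).det =
      (∏ i ∈ Finset.Icc 1 (n - 1),
          (i.factorial : ℂ) * (a * ((i : ℂ) - 1) + a * c - b) ^ (n - i)) /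
        ∏ i ∈ Finset.Icc 1 (n - 1), ((i : ℂ) + 1 + c) ^ i * (2 * (n : ℂ) - i + c) ^ i := by
  rcases n with _ | m
  · simp
  have hcol (j : Fin (m + 1)) : ∀ s < m, (((j : ℕ) + s : ℕ) : ℂ) + 2 + c ≠ 0 := by
    intro s hs
    have := hden (s + 1) (j + 1) (by omega) (by omega) (by omega) (by omega)
    push_cast at this ⊢
    rwa [show (s : ℂ) + 1 + ((j : ℂ) + 1) + c = (j : ℂ) + s + 2 + c by ring] at this
  have hdet : (∏ j : Fin (m + 1), colFactor c m j) * (Mmat (m + 1) a b c).det =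
      ∏ i ∈ range m, ((i + 1).factorial * (a * i + a * c - b) ^ (m - i)) := by
    rw [← Matrix.det_mul_row, ← det_evalMatrix_rowPoly]
    congr 1
    ext i j
    exact colFactor_mul_Mmat_apply a b c m i j (hcol j)
  have hcol_ne : ∏ j : Fin (m + 1), colFactor c m j ≠ 0 :=
    prod_ne_zero_iff.2 fun j _ => prod_ne_zero_iff.2 fun s hs => hcol j s (mem_range.1 hs)
  rw [Nat.add_sub_cancel, eq_div_iff (prod_colFactor c m ▸ hcol_ne), ← prod_colFactor, mul_comm,
    hdet, prod_Icc_one_eq_prod_range]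
  refine prod_congr rfl fun i _ => ?_
  push_cast
  ring

theorem stmt1 (n : ℕ) (a b c : ℂ)
    (hden : ∀ s j : ℕ, 1 ≤ s → s ≤ n - 1 → 1 ≤ j → j ≤ n → (s : ℂ) + j + c ≠ 0)
    (hden2 : ∀ i : ℕ, 1 ≤ i → i ≤ n - 1 →
      ((i : ℂ) + 1 + c ≠ 0 ∧ 2 * (n : ℂ) - i + c ≠ 0)) :
    (Mmat n a b c).det =
      (∏ i ∈ Finset.Icc 1 (n - 1),
          (i.factorial : ℂ) * (a * ((i : ℂ) - 1) + a * c - b) ^ (n - i)) /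
        ∏ i ∈ Finset.Icc 1 (n - 1), ((i : ℂ) + 1 + c) ^ i * (2 * (n : ℂ) - i + c) ^ i :=
  stmt1_general n a b c hden
end

section
/- Let $(a_n)_{n \ge 0}$ be a complex sequence satisfying $a_{n+1} = (\alpha + \frac{\beta}{n+\gamma}) a_n$ (with arbitrary $a_0$), and let $d_n^{(k)} = \det (a_{i+j+k-2})_{1 \le i,j \le n}$. If $d_n^{(k)} = 0$ then $d_n^{(k+1)} = 0$. -/
open Finset Polynomial

theorem stmt4 (a : ℕ → ℂ) (α β γ : ℂ) (n k : ℕ)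
    (hγ : ∀ m : ℕ, (m : ℂ) + γ ≠ 0)
    (hrec : ∀ m : ℕ, a (m + 1) = (α + β / ((m : ℂ) + γ)) * a m)
    (h : (Matrix.of fun i j : Fin n => a ((i : ℕ) + (j : ℕ) + k)).det = 0) :
    (Matrix.of fun i j : Fin n => a ((i : ℕ) + (j : ℕ) + (k + 1))).det = 0 := by
  classical
  -- zeros propagate forward
  have hzero : ∀ z j : ℕ, a z = 0 → a (z + j) = 0 := by
    intro z j hz
    induction j with
    | zero => exact hz
    | succ j ih =>
      rw [show z + (j + 1) = (z + j) + 1 from rfl, hrec (z + j), ih, mul_zero]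
  -- product formula with cleared denominators
  have prodA : ∀ m j : ℕ, a (m + j) * ∏ t ∈ range j, (((m + t : ℕ) : ℂ) + γ)
      = a m * ∏ t ∈ range j, (α * (((m + t : ℕ) : ℂ) + γ) + β) := by
    intro m j
    induction j with
    | zero => simp
    | succ j ih =>
      rw [prod_range_succ, prod_range_succ,
        show m + (j + 1) = (m + j) + 1 from rfl, hrec (m + j)]
      calc (α + β / (((m + j : ℕ) : ℂ) + γ)) * a (m + j)
            * ((∏ t ∈ range j, (((m + t : ℕ) : ℂ) + γ)) * (((m + j : ℕ) : ℂ) + γ))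
          = (a (m + j) * ∏ t ∈ range j, (((m + t : ℕ) : ℂ) + γ))
            * ((α + β / (((m + j : ℕ) : ℂ) + γ)) * (((m + j : ℕ) : ℂ) + γ)) := by ring
        _ = (a m * ∏ t ∈ range j, (α * (((m + t : ℕ) : ℂ) + γ) + β))
            * (α * (((m + j : ℕ) : ℂ) + γ) + β) := by
            rw [ih, add_mul, div_mul_cancel₀ _ (hγ (m + j))]
        _ = a m * ((∏ t ∈ range j, (α * (((m + t : ℕ) : ℂ) + γ) + β))
            * (α * (((m + j : ℕ) : ℂ) + γ) + β)) := by ring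
  rw [← Matrix.exists_mulVec_eq_zero_iff] at h ⊢
  obtain ⟨c, hc0, hMc⟩ := h
  set F : ℕ → ℂ := fun m => ∑ j : Fin n, a (m + (j : ℕ) + k) * c j with hFdef
  have hF : ∀ m, m < n → F m = 0 := by
    intro m hm
    have := congrFun hMc ⟨m, hm⟩
    simpa [hFdef, Matrix.mulVec, dotProduct] using this
  -- the crucial extra vanishing
  have hFn : F n = 0 := by
    rcases Nat.eq_zero_or_pos n with hn | hn
    · subst hn; simp [hFdef]
    by_cases hkn : a (k + n) = 0
    · apply Finset.sum_eq_zero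
      intro j _
      rw [show n + (j : ℕ) + k = (k + n) + (j : ℕ) by omega, hzero _ _ hkn, zero_mul]
    · have hne : ∀ m, m ≤ n → a (k + m) ≠ 0 := by
        intro m hm hz
        exact hkn (by rw [show k + n = (k + m) + (n - m) by omega]; exact hzero _ _ hz)
      set P : ℂ[X] := ∑ j : Fin n, C (c j) *
          ((∏ t ∈ range (j : ℕ), (C α * (X + C (((t + k : ℕ) : ℂ) + γ)) + C β)) *
           ∏ t ∈ Ico (j : ℕ) (n - 1), (X + C (((t + k : ℕ) : ℂ) + γ))) with hP
      have cast1 : ∀ m t : ℕ, (m : ℂ) + (((t + k : ℕ) : ℂ) + γ) = ((k + m + t : ℕ) : ℂ) + γ := by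
        intro m t; push_cast; ring
      have hiden : ∀ m : ℕ, a (k + m) * P.eval (m : ℂ)
          = (∏ t ∈ range (n - 1), (((k + m + t : ℕ) : ℂ) + γ)) * F m := by
        intro m
        rw [hP, hFdef]
        simp only [Polynomial.eval_finset_sum, Polynomial.eval_mul, Polynomial.eval_prod,
          Polynomial.eval_add, Polynomial.eval_C, Polynomial.eval_X]
        rw [Finset.mul_sum, Finset.mul_sum]
        apply Finset.sum_congr rfl
        intro j _
        have hj : (j : ℕ) ≤ n - 1 := by omega
        simp only [cast1 m]
        have key := prodA (k + m) (j : ℕ)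
        calc a (k + m) * (c j * ((∏ t ∈ range (j : ℕ), (α * (((k + m + t : ℕ) : ℂ) + γ) + β)) *
                ∏ t ∈ Ico (j : ℕ) (n - 1), (((k + m + t : ℕ) : ℂ) + γ)))
            = (a (k + m) * ∏ t ∈ range (j : ℕ), (α * (((k + m + t : ℕ) : ℂ) + γ) + β)) *
                (∏ t ∈ Ico (j : ℕ) (n - 1), (((k + m + t : ℕ) : ℂ) + γ)) * c j := by ring
          _ = (a (k + m + (j : ℕ)) * ∏ t ∈ range (j : ℕ), (((k + m + t : ℕ) : ℂ) + γ)) *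
                (∏ t ∈ Ico (j : ℕ) (n - 1), (((k + m + t : ℕ) : ℂ) + γ)) * c j := by rw [key]
          _ = a (k + m + (j : ℕ)) * ((∏ t ∈ range (j : ℕ), (((k + m + t : ℕ) : ℂ) + γ)) *
                ∏ t ∈ Ico (j : ℕ) (n - 1), (((k + m + t : ℕ) : ℂ) + γ)) * c j := by ring
          _ = a (k + m + (j : ℕ)) * (∏ t ∈ range (n - 1), (((k + m + t : ℕ) : ℂ) + γ)) * c j := by
                rw [Finset.prod_range_mul_prod_Ico _ hj]
          _ = (∏ t ∈ range (n - 1), (((k + m + t : ℕ) : ℂ) + γ)) *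
                (a (m + (j : ℕ) + k) * c j) := by
                rw [show k + m + (j : ℕ) = m + (j : ℕ) + k by omega]; ring
      have hdeg : P.natDegree ≤ n - 1 := by
        rw [hP]
        apply Polynomial.natDegree_sum_le_of_forall_le
        intro j _
        have hj : (j : ℕ) ≤ n - 1 := by omega
        calc (C (c j) * ((∏ t ∈ range (j : ℕ), (C α * (X + C (((t + k : ℕ) : ℂ) + γ)) + C β)) *
                ∏ t ∈ Ico (j : ℕ) (n - 1), (X + C (((t + k : ℕ) : ℂ) + γ)))).natDegree
            ≤ (C (c j)).natDegree +
              ((∏ t ∈ range (j : ℕ), (C α * (X + C (((t + k : ℕ) : ℂ) + γ)) + C β)) *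
                ∏ t ∈ Ico (j : ℕ) (n - 1), (X + C (((t + k : ℕ) : ℂ) + γ))).natDegree :=
              Polynomial.natDegree_mul_le
          _ ≤ 0 + ((∏ t ∈ range (j : ℕ), (C α * (X + C (((t + k : ℕ) : ℂ) + γ)) + C β)).natDegree +
              (∏ t ∈ Ico (j : ℕ) (n - 1), (X + C (((t + k : ℕ) : ℂ) + γ))).natDegree) := by
              rw [Polynomial.natDegree_C]
              exact Nat.add_le_add_left Polynomial.natDegree_mul_le 0
          _ ≤ 0 + ((∑ t ∈ range (j : ℕ), 1) + ∑ t ∈ Ico (j : ℕ) (n - 1), 1) := by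
              gcongr
              · exact (Polynomial.natDegree_prod_le _ _).trans (Finset.sum_le_sum
                  (fun t _ => by compute_degree))
              · exact (Polynomial.natDegree_prod_le _ _).trans (Finset.sum_le_sum
                  (fun t _ => by compute_degree))
          _ ≤ n - 1 := by
              simp only [Finset.sum_const, smul_eq_mul, mul_one, Finset.card_range,
                Nat.card_Ico]
              omega
      have hP0 : P = 0 := by
        apply Polynomial.eq_zero_of_natDegree_lt_card_of_eval_eq_zero P
          (f := fun i : Fin n => ((i : ℕ) : ℂ))
          (fun i j hij => Fin.ext (Nat.cast_injective hij))
        · intro i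
          have h1 := hiden (i : ℕ)
          rw [hF _ i.isLt, mul_zero] at h1
          exact (mul_eq_zero.mp h1).resolve_left (hne _ (Nat.le_of_lt i.isLt))
        · simpa using lt_of_le_of_lt hdeg (by omega)
      have h2 := hiden n
      rw [hP0] at h2
      simp only [Polynomial.eval_zero, mul_zero] at h2
      have h3 : (∏ t ∈ range (n - 1), (((k + n + t : ℕ) : ℂ) + γ)) ≠ 0 :=
        Finset.prod_ne_zero_iff.mpr (fun t _ => hγ (k + n + t))
      exact (mul_eq_zero.mp h2.symm).resolve_left h3
  -- conclude
  refine ⟨c, hc0, ?_⟩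
  funext i
  show ∑ j : Fin n, a ((i : ℕ) + (j : ℕ) + (k + 1)) * c j = 0
  have : ∑ j : Fin n, a ((i : ℕ) + (j : ℕ) + (k + 1)) * c j = F ((i : ℕ) + 1) := by
    apply Finset.sum_congr rfl
    intro j _
    rw [show (i : ℕ) + (j : ℕ) + (k + 1) = ((i : ℕ) + 1) + (j : ℕ) + k by omega]
  rw [this]
  rcases Nat.lt_or_ge ((i : ℕ) + 1) n with hlt | hge
  · exact hF _ hlt
  · have : (i : ℕ) + 1 = n := by omega
    rw [this]; exact hFn
end

section
/- Let $(a_n)_{n \ge 0}$ be a complex sequence with $a_0 = 1$ satisfying $a_{n+1} = (\alpha + \frac{\beta}{n+\gamma}) a_n$, and let $d_n^{(k)} = \det (a_{i+j+k-2})_{1 \le i,j \le n}$. Then $d_n^{(j+1)} = d_n^{(j)} \prod_{i=1}^{n} \frac{\alpha(i+j+\gamma-1)+\beta}{i+j+\gamma+n-2}$ for all $j \ge 0$, provided $i+j+\gamma+n-2 \neq 0$ for $1 \le i \le n$. -/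
open Finset

lemma hankel_key (a b : ℕ → ℂ) (α β γ : ℂ) (J n : ℕ)
    (hγ : ∀ m : ℕ, (m : ℂ) + γ ≠ 0)
    (hrec : ∀ m : ℕ, a (m + 1) = (α + β / ((m : ℂ) + γ)) * a m)
    (hb : ∀ m : ℕ, b m = a m / ((m : ℂ) + γ)) :
    (Matrix.of fun p q : Fin (n + 1) => a ((p : ℕ) + (q : ℕ) + J)).det =
      a J * ((∏ q : Fin n, (-β * (((q : ℕ) : ℂ) + 1))) *
        (∏ p : Fin n, (((p : ℕ) : ℂ) + (J : ℂ) + γ)⁻¹)) *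
      (Matrix.of fun p q : Fin n => b ((p : ℕ) + (q : ℕ) + (J + 1))).det := by
  classical
  set A : Matrix (Fin (n + 1)) (Fin (n + 1)) ℂ :=
    Matrix.of fun p q : Fin (n + 1) => a ((p : ℕ) + (q : ℕ) + J) with hA
  set L : Matrix (Fin (n + 1)) (Fin (n + 1)) ℂ :=
    Matrix.of fun p p' : Fin (n + 1) =>
      if p' = p then (1 : ℂ)
      else if ((p' : ℕ) + 1 = (p : ℕ)) then -(α + β / (((p' : ℕ) : ℂ) + (J : ℂ) + γ)) else 0
    with hL
  have hLsplit : ∀ p p' : Fin (n + 1), L p p' =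
      (if p' = p then (1 : ℂ) else 0) +
      (if ((p' : ℕ) + 1 = (p : ℕ)) then -(α + β / (((p' : ℕ) : ℂ) + (J : ℂ) + γ)) else 0) := by
    intro p p'
    by_cases h1 : p' = p
    · have h2 : ¬((p' : ℕ) + 1 = (p : ℕ)) := by subst h1; omega
      simp [hL, h1, h2]
    · simp [hL, h1]
  have hLdet : L.det = 1 := by
    rw [Matrix.det_of_lowerTriangular L]
    · have h : ∀ p : Fin (n + 1), L p p = 1 := by intro p; simp [hL]
      simp [h]
    · intro i j hij
      have hij' : i < j := hij
      have h1 : ¬(j = i) := fun h => absurd (h ▸ hij') (lt_irrefl _)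
      have h2 : ¬((j : ℕ) + 1 = (i : ℕ)) := by
        have := Fin.lt_def.mp hij'; omega
      simp [hL, h1, h2]
  have hM : ∀ p q : Fin (n + 1), (L * A) p q = A p q +
      ∑ p' : Fin (n + 1), (if ((p' : ℕ) + 1 = (p : ℕ))
        then -(α + β / (((p' : ℕ) : ℂ) + (J : ℂ) + γ)) * A p' q else 0) := by
    intro p q
    rw [Matrix.mul_apply,
      Finset.sum_congr rfl (fun p' _ => by rw [hLsplit p p', add_mul]),
      Finset.sum_add_distrib]
    congr 1
    · rw [Finset.sum_congr rfl (fun p' _ => by rw [ite_mul, one_mul, zero_mul])]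
      rw [Finset.sum_ite_eq' Finset.univ p (fun p' => A p' q)]
      simp
    · exact Finset.sum_congr rfl (fun p' _ => by split <;> simp)
  have hM0 : ∀ q : Fin (n + 1), (L * A) 0 q = a ((q : ℕ) + J) := by
    intro q
    rw [hM]
    simp [hA]
  have hM2 : ∀ (p : Fin n) (q : Fin (n + 1)), (L * A) p.succ q =
      A p.succ q - (α + β / (((p : ℕ) : ℂ) + (J : ℂ) + γ)) * A p.castSucc q := by
    intro p q
    rw [hM]
    have e : ∀ p' : Fin (n + 1),
        (if ((p' : ℕ) + 1 = ((p.succ : Fin (n + 1)) : ℕ))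
          then -(α + β / (((p' : ℕ) : ℂ) + (J : ℂ) + γ)) * A p' q else 0) =
        (if p' = p.castSucc
          then -(α + β / (((p' : ℕ) : ℂ) + (J : ℂ) + γ)) * A p' q else 0) := by
      intro p'
      refine if_congr ?_ rfl rfl
      rw [Fin.ext_iff]
      simp
    rw [Finset.sum_congr rfl (fun p' _ => e p'),
      Finset.sum_ite_eq' Finset.univ p.castSucc]
    simp only [Finset.mem_univ, if_true, Fin.coe_castSucc]
    ring
  have hfz : ∀ p : Fin n, (L * A) p.succ 0 = 0 := by
    intro p
    rw [hM2]
    simp only [hA, Matrix.of_apply, Fin.val_succ, Fin.coe_castSucc, Fin.val_zero, add_zero]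
    rw [show (p : ℕ) + 1 + J = ((p : ℕ) + J) + 1 by omega, hrec ((p : ℕ) + J)]
    push_cast
    ring
  have hfm : ∀ p q : Fin n, (L * A) p.succ q.succ =
      (-β * (((q : ℕ) : ℂ) + 1)) * (((((p : ℕ) : ℂ)) + (J : ℂ) + γ)⁻¹ *
        (Matrix.of fun p q : Fin n => b ((p : ℕ) + (q : ℕ) + (J + 1))) p q) := by
    intro p q
    rw [hM2]
    simp only [hA, Matrix.of_apply, Fin.val_succ, Fin.coe_castSucc]
    rw [show (p : ℕ) + 1 + ((q : ℕ) + 1) + J = ((p : ℕ) + (q : ℕ) + (J + 1)) + 1 by omega,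
        show (p : ℕ) + ((q : ℕ) + 1) + J = (p : ℕ) + (q : ℕ) + (J + 1) by omega,
        hrec ((p : ℕ) + (q : ℕ) + (J + 1)), hb ((p : ℕ) + (q : ℕ) + (J + 1))]
    have hX : (((p : ℕ) + (q : ℕ) + (J + 1) : ℕ) : ℂ) + γ ≠ 0 := hγ _
    have hY : ((p : ℕ) : ℂ) + (J : ℂ) + γ ≠ 0 := by
      have := hγ ((p : ℕ) + J); push_cast at this; exact this
    push_cast
    push_cast at hX
    field_simp
    ring
  have hdet : A.det = (L * A).det := by rw [Matrix.det_mul, hLdet, one_mul]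
  rw [hdet, Matrix.det_succ_column_zero, Fin.sum_univ_succ,
    Finset.sum_eq_zero (fun (i : Fin n) _ => by rw [hfz i]; ring), add_zero]
  rw [hM0 0, Fin.succAbove_zero]
  have hmin : (L * A).submatrix Fin.succ Fin.succ = Matrix.of (fun p q : Fin n =>
      (-β * (((q : ℕ) : ℂ) + 1)) * ((Matrix.of fun p q : Fin n =>
        (((p : ℕ) : ℂ) + (J : ℂ) + γ)⁻¹ *
        (Matrix.of fun p q : Fin n => b ((p : ℕ) + (q : ℕ) + (J + 1))) p q)) p q) := by
    ext p q
    exact hfm p q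
  rw [hmin, Matrix.det_mul_row, Matrix.det_mul_column]
  simp only [Fin.val_zero, pow_zero, one_mul, Nat.zero_add, zero_add]
  ring

lemma hankel_aux : ∀ (n : ℕ) (a : ℕ → ℂ) (α β γ : ℂ) (j : ℕ),
    (∀ m : ℕ, (m : ℂ) + γ ≠ 0) →
    (∀ m : ℕ, a (m + 1) = (α + β / ((m : ℂ) + γ)) * a m) →
    (Matrix.of fun p q : Fin n => a ((p : ℕ) + (q : ℕ) + (j + 1))).det *
        ∏ i ∈ range n, ((i : ℂ) + (j : ℂ) + γ + (n : ℂ) - 1) =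
      (Matrix.of fun p q : Fin n => a ((p : ℕ) + (q : ℕ) + j)).det *
        ∏ i ∈ range n, (α * ((i : ℂ) + (j : ℂ) + γ) + β) := by
  intro n
  induction n with
  | zero => intro a α β γ j hγ hrec; simp [Matrix.det_fin_zero]
  | succ n ih =>
    intro a α β γ j hγ hrec
    set b : ℕ → ℂ := fun m => a m / ((m : ℂ) + γ) with hbdef
    have hb : ∀ m : ℕ, b m = a m / ((m : ℂ) + γ) := fun m => rfl
    have hγ' : ∀ m : ℕ, (m : ℂ) + (γ + 1) ≠ 0 := by
      intro m h
      apply hγ (m + 1)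
      push_cast
      linear_combination h
    have hrec' : ∀ m : ℕ, b (m + 1) = (α + (β - α) / ((m : ℂ) + (γ + 1))) * b m := by
      intro m
      rw [hb, hb, hrec m]
      have h1 := hγ m
      have h2 : ((m : ℂ) + 1) + γ ≠ 0 := by
        have := hγ (m + 1); push_cast at this; exact this
      have h3 : (m : ℂ) + (γ + 1) ≠ 0 := hγ' m
      push_cast
      field_simp
      ring
    have IH := ih b α (β - α) (γ + 1) (j + 1) hγ' hrec'
    have k1 := hankel_key a b α β γ j n hγ hrec hb
    have k2 := hankel_key a b α β γ (j + 1) n hγ hrec hb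
    -- product splitting
    have hP1 : (∏ i ∈ range (n + 1), ((i : ℂ) + (j : ℂ) + γ + ((n : ℕ) + 1 : ℕ) - 1)) =
        ((j : ℂ) + γ + (n : ℂ)) *
          ∏ i ∈ range n, ((i : ℂ) + ((j : ℕ) + 1 : ℕ) + (γ + 1) + (n : ℂ) - 1) := by
      rw [Finset.prod_range_succ']
      push_cast
      rw [mul_comm]
      congr 1
      · ring
      · exact Finset.prod_congr rfl (fun i _ => by push_cast; ring)
    have hP2 : (∏ i ∈ range (n + 1), (α * ((i : ℂ) + (j : ℂ) + γ) + β)) =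
        (α * ((j : ℂ) + γ) + β) *
          ∏ i ∈ range n, (α * ((i : ℂ) + ((j : ℕ) + 1 : ℕ) + (γ + 1)) + (β - α)) := by
      rw [Finset.prod_range_succ']
      push_cast
      rw [mul_comm]
      congr 1
      · ring
      · exact Finset.prod_congr rfl (fun i _ => by push_cast; ring)
    have hj : (j : ℂ) + γ ≠ 0 := hγ j
    set PA := ∏ p : Fin n, (((p : ℕ) : ℂ) + (j : ℂ) + γ) with hPA
    set PB := ∏ p : Fin n, (((p : ℕ) : ℂ) + ((j + 1 : ℕ) : ℂ) + γ) with hPB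
    have hPA0 : PA ≠ 0 := Finset.prod_ne_zero_iff.mpr (fun p _ => by
      have := hγ ((p : ℕ) + j); push_cast at this ⊢; exact this)
    have hPB0 : PB ≠ 0 := Finset.prod_ne_zero_iff.mpr (fun p _ => by
      have := hγ ((p : ℕ) + (j + 1)); push_cast at this ⊢; intro h; apply this
      linear_combination h)
    have hshift : ((j : ℂ) + γ) * PB = PA * ((n : ℂ) + (j : ℂ) + γ) := by
      have e1 : (∏ p : Fin (n + 1), (((p : ℕ) : ℂ) + (j : ℂ) + γ)) = ((j : ℂ) + γ) * PB := by
        rw [Fin.prod_univ_succ]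
        congr 1
        · simp
        · exact Finset.prod_congr rfl (fun p _ => by push_cast [Fin.val_succ]; ring)
      have e2 : (∏ p : Fin (n + 1), (((p : ℕ) : ℂ) + (j : ℂ) + γ)) =
          PA * ((n : ℂ) + (j : ℂ) + γ) := by
        rw [Fin.prod_univ_castSucc, hPA]
        simp [Fin.coe_castSucc, Fin.val_last]
      rw [← e1, e2]
    have scalar : a (j + 1) * (∏ p : Fin n, (((p : ℕ) : ℂ) + ((j + 1 : ℕ) : ℂ) + γ)⁻¹) *
          ((j : ℂ) + γ + (n : ℂ)) =
        a j * (∏ p : Fin n, (((p : ℕ) : ℂ) + (j : ℂ) + γ)⁻¹) * (α * ((j : ℂ) + γ) + β) := by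
      rw [Finset.prod_inv_distrib, Finset.prod_inv_distrib, ← hPA, ← hPB, hrec j]
      field_simp
      linear_combination (-(a j * (α * ((j : ℂ) + γ) + β))) * hshift
    rw [k1, k2, hP1, hP2]
    linear_combination
      ((∏ q : Fin n, (-β * (((q : ℕ) : ℂ) + 1))) *
        (Matrix.of fun p q : Fin n => b ((p : ℕ) + (q : ℕ) + (j + 1 + 1))).det *
        (∏ i ∈ range n, ((i : ℂ) + ((j + 1 : ℕ) : ℂ) + (γ + 1) + (n : ℂ) - 1))) * scalar +
      ((∏ q : Fin n, (-β * (((q : ℕ) : ℂ) + 1))) *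
        (a j * (∏ p : Fin n, (((p : ℕ) : ℂ) + (j : ℂ) + γ)⁻¹) *
          (α * ((j : ℂ) + γ) + β))) * IH

lemma hankel_prod_Icc_one (f : ℕ → ℂ) (n : ℕ) :
    (∏ i ∈ Finset.Icc 1 n, f i) = ∏ i ∈ Finset.range n, f (i + 1) := by
  induction n with
  | zero => simp
  | succ n ih => rw [Finset.prod_Icc_succ_top (by omega), ih, Finset.prod_range_succ]

theorem stmt5 (a : ℕ → ℂ) (α β γ : ℂ) (n j : ℕ) (ha0 : a 0 = 1)
    (hγ : ∀ m : ℕ, (m : ℂ) + γ ≠ 0)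
    (hrec : ∀ m : ℕ, a (m + 1) = (α + β / ((m : ℂ) + γ)) * a m)
    (hden : ∀ i : ℕ, 1 ≤ i → i ≤ n → (i : ℂ) + j + γ + n - 2 ≠ 0) :
    (Matrix.of fun p q : Fin n => a ((p : ℕ) + (q : ℕ) + (j + 1))).det =
      (Matrix.of fun p q : Fin n => a ((p : ℕ) + (q : ℕ) + j)).det *
        ∏ i ∈ Finset.Icc 1 n,
          (α * ((i : ℂ) + j + γ - 1) + β) / ((i : ℂ) + j + γ + n - 2) := by
  have AUX := hankel_aux n a α β γ j hγ hrec
  have hQ0 : (∏ i ∈ range n, ((i : ℂ) + (j : ℂ) + γ + (n : ℂ) - 1)) ≠ 0 := by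
    apply Finset.prod_ne_zero_iff.mpr
    intro i hi
    have hn : 1 ≤ n := by have := Finset.mem_range.mp hi; omega
    obtain ⟨m, rfl⟩ : ∃ m, n = m + 1 := ⟨n - 1, by omega⟩
    have h0 := hγ (i + j + m)
    intro h
    apply h0
    push_cast at h ⊢
    linear_combination h
  have hIcc : (∏ i ∈ Finset.Icc 1 n,
        ((α * ((i : ℂ) + j + γ - 1) + β) / ((i : ℂ) + j + γ + n - 2))) =
      (∏ i ∈ range n, (α * ((i : ℂ) + (j : ℂ) + γ) + β)) /
        (∏ i ∈ range n, ((i : ℂ) + (j : ℂ) + γ + (n : ℂ) - 1)) := by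
    rw [← Finset.prod_div_distrib, hankel_prod_Icc_one]
    exact Finset.prod_congr rfl (fun i _ => by push_cast; ring)
  rw [hIcc, ← mul_div_assoc, eq_div_iff hQ0]
  exact AUX
end

section
/- Let $a_n = \frac{1}{n+1}$ and let $d_n^{(k)}$ be the determinant of the $n \times n$ generalized Hilbert matrix with $(i,j)$-entry $\frac{1}{i+j+k-1}$. Then $d_n^{(k)} = \frac{\prod_{i=1}^{n-1}(i!)^2}{\prod_{i=1}^{n}\prod_{j=1}^{n}(i+j+k-1)}$. -/
/-!
The Hilbert matrix is the Cauchy matrix `(x i + y j)⁻¹` with `x i = i` and `y j = j + k + 1`.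
Eliminating the first column with the `(0, 0)` entry as pivot leaves, as Schur complement, a
smaller Cauchy matrix scaled by diagonal matrices, because
`(x i + y j)⁻¹ - (x 0 + y 0) / ((x i + y 0) (x 0 + y j))`
`  = (x i - x 0) (y j - y 0) / ((x i + y j) (x i + y 0) (x 0 + y j))`.
By induction this gives Cauchy's formula `det = det V(x) * det V(y) / ∏ i j, (x i + y j)`, and for
the Hilbert matrix both Vandermonde determinants equal the superfactorial `∏ i < n, i!`.
-/

open Finset

namespace Matrix

variable {K : Type*} [Field K] {n : ℕ}

theorem det_succ_eq_mul_det_schur (A : Matrix (Fin (n + 1)) (Fin (n + 1)) K) (h : A 0 0 ≠ 0) :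
    A.det = A 0 0 *
      (of fun i j : Fin n => A i.succ j.succ - A i.succ 0 / A 0 0 * A 0 j.succ).det := by
  let B : Matrix (Fin (n + 1)) (Fin (n + 1)) K :=
    of fun i j => if i = 0 then A 0 j else A i j - A i 0 / A 0 0 * A 0 j
  have hAB : A.det = B.det :=
    det_eq_of_forall_row_eq_smul_add_const (fun i => if i = 0 then 0 else A i 0 / A 0 0) 0
      (by simp) fun i j => by by_cases hi : i = 0 <;> simp [B, hi]
  rw [hAB, det_succ_column_zero, Fin.sum_univ_succ, sum_eq_zero fun i _ => ?_]
  · simp only [B, of_apply, if_true, Fin.val_zero, pow_zero, one_mul, add_zero,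
      Fin.succAbove_zero]
    congr 1
  · simp [B, h]

theorem det_vandermonde_succ {R : Type*} [CommRing R] (x : Fin (n + 1) → R) :
    (vandermonde x).det = (∏ i : Fin n, (x i.succ - x 0)) * (vandermonde (Fin.tail x)).det := by
  simp [det_vandermonde, Fin.prod_univ_succ, Fin.prod_Ioi_succ, Fin.tail]

def cauchy {m : Type*} (x y : m → K) : Matrix m m K :=
  of fun i j => (x i + y j)⁻¹

theorem det_cauchy_succ (x y : Fin (n + 1) → K) (h : ∀ i j, x i + y j ≠ 0) :
    (cauchy x y).det = (x 0 + y 0)⁻¹ * (∏ i : Fin n, (x i.succ - x 0) / (x i.succ + y 0)) *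
      (∏ j : Fin n, (y j.succ - y 0) / (x 0 + y j.succ)) *
        (cauchy (Fin.tail x) (Fin.tail y)).det := by
  have hschur : (of fun i j : Fin n => cauchy x y i.succ j.succ -
      cauchy x y i.succ 0 / cauchy x y 0 0 * cauchy x y 0 j.succ) =
      diagonal (fun i => (x i.succ - x 0) / (x i.succ + y 0)) * cauchy (Fin.tail x) (Fin.tail y) *
        diagonal (fun j => (y j.succ - y 0) / (x 0 + y j.succ)) := by
    ext i j
    have := h i.succ j.succ
    have := h i.succ 0
    have := h 0 j.succ
    have := h 0 0
    simp only [cauchy, of_apply, mul_diagonal, diagonal_mul, Fin.tail]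
    field_simp
    ring
  rw [det_succ_eq_mul_det_schur _ (inv_ne_zero (h 0 0)), hschur, det_mul, det_mul, det_diagonal,
    det_diagonal, cauchy, of_apply]
  ring

theorem det_cauchy (x y : Fin n → K) (h : ∀ i j, x i + y j ≠ 0) :
    (cauchy x y).det = (vandermonde x).det * (vandermonde y).det / ∏ i, ∏ j, (x i + y j) := by
  induction n with
  | zero => simp
  | succ n ih =>
    rw [det_cauchy_succ x y h, ih (Fin.tail x) (Fin.tail y) fun i j => h i.succ j.succ,
      det_vandermonde_succ x, det_vandermonde_succ y]
    simp only [Fin.tail, Fin.prod_univ_succ, prod_mul_distrib, prod_inv_distrib, div_eq_mul_inv,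
      mul_inv]
    ring

theorem det_vandermonde_natCast {R : Type*} [CommRing R] (n : ℕ) :
    (vandermonde fun i : Fin n => ((i : ℕ) : R)).det = (n - 1).superFactorial := by
  cases n with
  | zero => simp
  | succ n => simpa using det_vandermonde_id_eq_superFactorial (R := R) n

theorem det_hilbert [CharZero K] (n k : ℕ) :
    (of fun i j : Fin n => 1 / (((i : ℕ) : K) + (j : ℕ) + k + 1)).det =
      ((n - 1).superFactorial : K) ^ 2 /
        ∏ i : Fin n, ∏ j : Fin n, (((i : ℕ) : K) + (j : ℕ) + k + 1) := by
  have hne : ∀ i j : Fin n, ((i : ℕ) : K) + ((j : ℕ) + (k + 1)) ≠ 0 := fun i j => by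
    exact_mod_cast Nat.succ_ne_zero (i + (j + k))
  have hcauchy : (of fun i j : Fin n => 1 / (((i : ℕ) : K) + (j : ℕ) + k + 1)) =
      cauchy (fun i : Fin n => ((i : ℕ) : K)) (fun j => ((j : ℕ) : K) + (k + 1)) := by
    ext i j
    simp only [cauchy, of_apply, one_div, add_assoc]
  rw [hcauchy, det_cauchy _ _ hne, det_vandermonde_add, det_vandermonde_natCast, sq]
  simp only [add_assoc]

end Matrix

theorem Finset.prod_Icc_one_eq_prod_fin {M : Type*} [CommMonoid M] (f : ℕ → M) (n : ℕ) :
    ∏ i ∈ Icc 1 n, f i = ∏ i : Fin n, f (i + 1) := by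
  rw [← Ico_add_one_right_eq_Icc, prod_Ico_eq_prod_range,
    Fin.prod_univ_eq_prod_range (fun i => f (i + 1)), Nat.add_sub_cancel]
  simp only [add_comm]

theorem stmt6_general (n k : ℕ) :
    (Matrix.of fun i j : Fin n => (1 : ℚ) / ((i : ℕ) + (j : ℕ) + k + 1)).det =
      (∏ i ∈ Finset.Icc 1 (n - 1), (i.factorial : ℚ) ^ 2) /
        ∏ i ∈ Finset.Icc 1 n, ∏ j ∈ Finset.Icc 1 n, ((i : ℚ) + j + k - 1) := by
  rw [Matrix.det_hilbert, prod_pow, ← Nat.cast_prod, Nat.prod_Icc_factorial]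
  congr 1
  simp only [prod_Icc_one_eq_prod_fin]
  refine prod_congr rfl fun i _ => prod_congr rfl fun j _ => ?_
  push_cast
  ring

theorem stmt6 (n k : ℕ) (hn : 1 ≤ n) :
    (Matrix.of fun i j : Fin n => (1 : ℚ) / ((i : ℕ) + (j : ℕ) + k + 1)).det =
      (∏ i ∈ Finset.Icc 1 (n - 1), (i.factorial : ℚ) ^ 2) /
        ∏ i ∈ Finset.Icc 1 n, ∏ j ∈ Finset.Icc 1 n, ((i : ℚ) + j + k - 1) :=
  stmt6_general n k
end

section
/- Let $a_n = \frac{1}{n!}$ and let $d_n^{(k)} = \det(a_{i+j+k-2})_{1 \le i,j \le n}$. Then $d_n^{(k)} = (-1)^{\binom{n}{2}} \prod_{i=0}^{n-1} \frac{i!}{(i+k+n-1)!}$. -/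
/-!
Reversing the columns costs the sign `(-1) ^ n.choose 2`. After that, multiplying row `i` by
`(i + k + n - 1)!` turns the entry in column `j` into the falling factorial
`(i + k + n - 1).descFactorial j`, i.e. the monic degree-`j` polynomial `descPochhammer j`
evaluated at `i + (k + n - 1)`. So the scaled matrix has the determinant of the Vandermonde
matrix of the shifted points `i + (k + n - 1)`, which is that of the points `i`, namely
`∏ i < n, i!`.
-/

open Finset Matrix Polynomial Nat

theorem Fin.sign_revPerm (n : ℕ) :
    Equiv.Perm.sign (Fin.revPerm : Equiv.Perm (Fin n)) = (-1) ^ n.choose 2 := by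
  have hpairs : ∑ i : Fin n, #(Ioi i) = n.choose 2 := by
    simp only [Fin.card_Ioi]
    rw [Fin.sum_univ_eq_sum_range (fun i => n - 1 - i), sum_range_reflect (fun i => i) n,
      sum_range_id, Nat.choose_two_right]
  rw [Equiv.Perm.sign_eq_prod_prod_Ioi, ← hpairs, ← prod_pow_eq_pow_sum]
  refine prod_congr rfl fun i _ => ?_
  -- every pair `i < j` is an inversion of `rev`
  refine (prod_congr rfl fun j hj => ?_).trans (Finset.prod_const _)
  simp [(mem_Ioi.1 hj).not_gt]

theorem det_eval_descPochhammer {R : Type*} [CommRing R] [Nontrivial R] [NoZeroDivisors R]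
    {n : ℕ} (v : Fin n → R) :
    (of fun i j : Fin n => (descPochhammer R j).eval (v i)).det = (vandermonde v).det :=
  (det_eval_matrixOfPolynomials_eq_det_vandermonde v _ (fun _ => descPochhammer_natDegree _ _)
    fun _ => monic_descPochhammer _ _).symm

theorem det_vandermonde_natCast_eq_prod_factorial {R : Type*} [CommRing R] (n : ℕ) :
    (vandermonde fun i : Fin n => (i : R)).det = ∏ i ∈ range n, (i ! : R) := by
  cases n with
  | zero => simp
  | succ n =>
    rw [det_vandermonde_id_eq_superFactorial, ← Nat.prod_range_succ_factorial]
    push_cast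
    rfl

theorem one_div_factorial_sub_eq_descFactorial_div {K : Type*} [Field K] [CharZero K] {m j : ℕ}
    (hj : j ≤ m) :
    1 / ((m - j)! : K) = m.descFactorial j / m ! := by
  have : (m.descFactorial j : K) ≠ 0 := by
    exact_mod_cast (Nat.descFactorial_pos.2 hj).ne'
  rw [← Nat.factorial_mul_descFactorial hj, Nat.cast_mul]
  field_simp

theorem submatrix_revPerm_hankel_inv_factorial {K : Type*} [Field K] [CharZero K] (n k : ℕ) :
    (of fun i j : Fin n => (1 : K) / ((i + j + k : ℕ)! : K)).submatrix id Fin.revPerm =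
      of fun i j : Fin n => 1 / ((i + k + n - 1 : ℕ)! : K) *
        (descPochhammer K j).eval ((i + k + n - 1 : ℕ) : K) := by
  ext i j
  have hj : (j : ℕ) ≤ i + k + n - 1 := by omega
  have hrev : i + k + n - 1 - j = i + j.rev + k := by rw [Fin.val_rev]; omega
  simp only [submatrix_apply, of_apply, id, Fin.revPerm_apply,
    descPochhammer_eval_eq_descFactorial, ← hrev, one_div_factorial_sub_eq_descFactorial_div hj]
  ring

theorem det_submatrix_revPerm_hankel_inv_factorial {K : Type*} [Field K] [CharZero K]
    (n k : ℕ) :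
    ((of fun i j : Fin n => (1 : K) / ((i + j + k : ℕ)! : K)).submatrix id Fin.revPerm).det =
      (∏ i : Fin n, 1 / ((i + k + n - 1 : ℕ)! : K)) * ∏ i ∈ range n, (i ! : K) := by
  have hshift : (fun i : Fin n => ((i + k + n - 1 : ℕ) : K)) =
      fun i : Fin n => ((i : ℕ) : K) + ((k + n - 1 : ℕ) : K) := by
    funext i
    rw [← Nat.cast_add]
    congr 1
    omega
  rw [submatrix_revPerm_hankel_inv_factorial]
  refine (det_mul_column _
    (of fun i j : Fin n => (descPochhammer K j).eval ((i + k + n - 1 : ℕ) : K))).trans ?_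
  rw [det_eval_descPochhammer, hshift, det_vandermonde_add,
    det_vandermonde_natCast_eq_prod_factorial]

theorem stmt9_general (n k : ℕ) :
    (Matrix.of fun i j : Fin n =>
        (1 : ℚ) / (((i : ℕ) + (j : ℕ) + k).factorial : ℚ)).det =
      (-1) ^ n.choose 2 *
        ∏ i ∈ Finset.range n, (i.factorial : ℚ) / ((i + k + n - 1).factorial : ℚ) := by
  have hsign : ((-1) ^ n.choose 2 : ℚ) * (-1) ^ n.choose 2 = 1 := by
    rw [← mul_pow]; simp
  have h := det_permute' Fin.revPerm
    (of fun i j : Fin n => (1 : ℚ) / ((i + j + k : ℕ)! : ℚ))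
  rw [det_submatrix_revPerm_hankel_inv_factorial, Fin.sign_revPerm] at h
  push_cast at h
  calc _ = ((-1) ^ n.choose 2 * (-1) ^ n.choose 2 : ℚ) *
        (of fun i j : Fin n => (1 : ℚ) / ((i + j + k : ℕ)! : ℚ)).det := by rw [hsign, one_mul]
    _ = (-1) ^ n.choose 2 * ((∏ i : Fin n, 1 / ((i + k + n - 1 : ℕ)! : ℚ)) *
        ∏ i ∈ range n, (i ! : ℚ)) := by rw [h]; ring
    _ = _ := by
      rw [Fin.prod_univ_eq_prod_range (fun i => 1 / ((i + k + n - 1 : ℕ)! : ℚ)),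
        ← prod_mul_distrib]
      simp only [one_div_mul_eq_div]

theorem stmt9 (n k : ℕ) (hn : 1 ≤ n) :
    (Matrix.of fun i j : Fin n =>
        (1 : ℚ) / (((i : ℕ) + (j : ℕ) + k).factorial : ℚ)).det =
      (-1) ^ n.choose 2 *
        ∏ i ∈ Finset.range n, (i.factorial : ℚ) / ((i + k + n - 1).factorial : ℚ) :=
  stmt9_general n k
end

section
/- Let $C_n = \frac{1}{n+1}\binom{2n}{n}$ be the Catalan numbers, and let $d_n^{(k)} = \det(C_{i+j+k-2})_{1 \le i,j \le n}$. Then $d_n^{(k)} = \prod_{1 \le i \le j \le k-1} \frac{i+j+2n}{i+j}$. In particular, $d_n^{(0)} = d_n^{(1)} = 1$ for all $n$. -/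
/-!
Applying the Desnanot–Jacobi identity (Dodgson condensation) to the Hankel matrix
`(a (i + j + k))` gives
`d_{n+2}^{(k)} d_n^{(k+2)} = d_{n+1}^{(k+2)} d_{n+1}^{(k)} - (d_{n+1}^{(k+1)})^2`.
The product formula satisfies the same recurrence, never vanishes, and agrees with the Catalan
Hankel determinants for `n = 0` (both are `1`) and `n = 1` (both are `C_k`), so the two agree
for all `n` by two-step induction. For the product, everything reduces to the ratios of the
inner factors under `n ↦ n + 1` and `j ↦ j + 1`, which are rational functions of `n` and `j`.
-/

open Finset Nat

namespace Matrix

variable {R : Type*} [CommRing R]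

theorem det_succ_row_of_eq_zero {p : ℕ} (A : Matrix (Fin (p + 1)) (Fin (p + 1)) R)
    (i j : Fin (p + 1)) (h : ∀ j' ≠ j, A i j' = 0) :
    A.det = (-1) ^ (i + j : ℕ) * A i j * (A.submatrix i.succAbove j.succAbove).det := by
  rw [det_succ_row A i, Fintype.sum_eq_single j fun j' hj' => by simp [h j' hj']]

theorem det_succ_column_of_eq_zero {p : ℕ} (A : Matrix (Fin (p + 1)) (Fin (p + 1)) R)
    (i j : Fin (p + 1)) (h : ∀ i' ≠ i, A i' j = 0) :
    A.det = (-1) ^ (i + j : ℕ) * A i j * (A.submatrix i.succAbove j.succAbove).det := by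
  rw [det_succ_column A j, Fintype.sum_eq_single i fun i' hi' => by simp [h i' hi']]

variable {m : ℕ}

/-- `adjugateCornerRows A * A` is `A` with its first and last rows replaced by `det A` times unit
rows, while `det (adjugateCornerRows A)` is a `2 × 2` minor of `adjugate A`. -/
def adjugateCornerRows (A : Matrix (Fin (m + 2)) (Fin (m + 2)) R) :
    Matrix (Fin (m + 2)) (Fin (m + 2)) R :=
  ((1 : Matrix _ _ R).updateRow 0 (adjugate A 0)).updateRow (Fin.last _) (adjugate A (Fin.last _))

theorem det_adjugateCornerRows_mul (A : Matrix (Fin (m + 2)) (Fin (m + 2)) R) :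
    (adjugateCornerRows A * A).det =
      A.det ^ 2 * (A.submatrix (Fin.succ ∘ Fin.castSucc) (Fin.succ ∘ Fin.castSucc)).det := by
  have hrow : ∀ i, adjugate A i ᵥ* A = A.det • Pi.single i 1 := fun i => by
    ext j; simpa [vecMul, dotProduct, mul_apply, one_apply, Pi.single_apply, eq_comm] using
      congrFun₂ (adjugate_mul A) i j
  set B := adjugateCornerRows A * A with hB
  have hB' : B = (A.updateRow 0 (A.det • Pi.single 0 1)).updateRow (Fin.last _)
      (A.det • Pi.single (Fin.last _) 1) := by
    rw [hB, adjugateCornerRows, updateRow_mul, updateRow_mul, one_mul, hrow, hrow]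
  have h0 : B.det = A.det * (B.submatrix Fin.succ Fin.succ).det := by
    rw [det_succ_row_of_eq_zero B 0 0 fun j hj => by simp [hB', Fin.last_pos.ne, hj]]
    simp [hB', Fin.last_pos.ne]
  have hlast : (B.submatrix Fin.succ Fin.succ).det =
      A.det * (A.submatrix (Fin.succ ∘ Fin.castSucc) (Fin.succ ∘ Fin.castSucc)).det := by
    rw [det_succ_row_of_eq_zero _ (Fin.last m) (Fin.last m) fun j hj => by
      simp [hB', ← Fin.succ_last, Fin.succ_inj, hj]]
    have hinterior : (B.submatrix Fin.succ Fin.succ).submatrix (Fin.last m).succAbove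
        (Fin.last m).succAbove =
          A.submatrix (Fin.succ ∘ Fin.castSucc) (Fin.succ ∘ Fin.castSucc) := by
      ext i j
      simp [hB', Fin.succ_ne_zero, Fin.castSucc_ne_last]
    rw [hinterior]
    simp [hB', ← Fin.succ_last, Even.neg_one_pow ⟨m, rfl⟩]
  rw [h0, hlast, sq, mul_assoc]

theorem det_adjugateCornerRows (A : Matrix (Fin (m + 2)) (Fin (m + 2)) R) :
    (adjugateCornerRows A).det = adjugate A 0 0 * adjugate A (Fin.last _) (Fin.last _) -
      adjugate A (Fin.last _) 0 * adjugate A 0 (Fin.last _) := by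
  have hfirst : ∀ j, adjugateCornerRows A 0 j = adjugate A 0 j := by
    simp [adjugateCornerRows, Fin.last_pos.ne]
  have hlast : ∀ j, adjugateCornerRows A (Fin.last _) j = adjugate A (Fin.last _) j := by
    simp [adjugateCornerRows]
  have hmid : ∀ i, i ≠ 0 → i ≠ Fin.last _ → ∀ j,
      adjugateCornerRows A i j = (1 : Matrix _ _ R) i j := by
    intro i h0 hl j
    simp [adjugateCornerRows, h0, hl]
  generalize adjugateCornerRows A = B at hfirst hlast hmid
  have hmid' : ∀ (i : Fin m) j, B i.castSucc.succ j = (1 : Matrix _ _ R) i.castSucc.succ j :=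
    fun i => hmid _ (Fin.succ_ne_zero _) (Fin.succ_castSucc i ▸ Fin.castSucc_ne_last _)
  have hsign : (-1 : R) ^ m * (-1) ^ m = 1 := by
    rw [← pow_add]; exact Even.neg_one_pow ⟨m, rfl⟩
  have hsucc : (B.submatrix Fin.succ Fin.succ).det = adjugate A (Fin.last _) (Fin.last _) := by
    rw [det_succ_column_of_eq_zero _ (Fin.last m) (Fin.last m) fun i hi => ?_]
    · have hone : (B.submatrix Fin.succ Fin.succ).submatrix Fin.castSucc Fin.castSucc = 1 := by
        ext i j
        simp [hmid', one_apply]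
      simp [Fin.succAbove_last, hone, pow_add, hsign, hlast]
    · simp [hmid _ (Fin.succ_ne_zero _) (by simpa [← Fin.succ_last] using hi), hi]
  have hcastSucc :
      (B.submatrix Fin.castSucc Fin.succ).det = (-1) ^ m * adjugate A 0 (Fin.last _) := by
    rw [det_succ_column_of_eq_zero _ 0 (Fin.last m) fun i hi => ?_]
    · have hone : (B.submatrix Fin.castSucc Fin.succ).submatrix Fin.succ Fin.castSucc = 1 := by
        ext i j
        simp [hmid', one_apply]
      simp [Fin.succAbove_last, hone, hfirst]
    · obtain ⟨i, rfl⟩ := Fin.exists_succ_eq.2 hi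
      rw [submatrix_apply, Fin.succ_last, ← Fin.succ_castSucc, hmid', one_apply_ne]
      exact Fin.succ_castSucc i ▸ Fin.castSucc_ne_last _
  rw [det_succ_column_zero, Fintype.sum_eq_add 0 (Fin.last _) Fin.last_pos.ne ?_]
  · simp only [Fin.succAbove_zero, Fin.succAbove_last, hsucc, hcastSucc, hfirst, hlast,
      Fin.val_zero, Fin.val_last, pow_zero, one_mul, pow_succ]
    linear_combination (-(adjugate A (Fin.last _) 0 * adjugate A 0 (Fin.last _))) * hsign
  · rintro i ⟨hi0, hil⟩
    simp [hmid i hi0 hil, hi0]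

theorem det_mul_desnanot_jacobi (A : Matrix (Fin (m + 2)) (Fin (m + 2)) R) :
    A.det * (A.det * (A.submatrix (Fin.succ ∘ Fin.castSucc) (Fin.succ ∘ Fin.castSucc)).det) =
      A.det * ((A.submatrix Fin.succ Fin.succ).det * (A.submatrix Fin.castSucc Fin.castSucc).det -
        (A.submatrix Fin.succ Fin.castSucc).det * (A.submatrix Fin.castSucc Fin.succ).det) := by
  have hsign : (-1 : R) ^ (m + 1 + (m + 1)) = 1 := Even.neg_one_pow ⟨m + 1, rfl⟩
  have h := det_mul (adjugateCornerRows A) A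
  rw [det_adjugateCornerRows_mul, det_adjugateCornerRows] at h
  simp only [adjugate_fin_succ_eq_det_submatrix, Fin.succAbove_zero, Fin.succAbove_last,
    Fin.val_zero, Fin.val_last, add_zero, zero_add, pow_zero, one_mul, hsign] at h
  linear_combination h - A.det * (A.submatrix Fin.succ Fin.castSucc).det *
    (A.submatrix Fin.castSucc Fin.succ).det * hsign

theorem desnanot_jacobi (A : Matrix (Fin (m + 2)) (Fin (m + 2)) R) :
    A.det * (A.submatrix (Fin.succ ∘ Fin.castSucc) (Fin.succ ∘ Fin.castSucc)).det =
      (A.submatrix Fin.succ Fin.succ).det * (A.submatrix Fin.castSucc Fin.castSucc).det -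
        (A.submatrix Fin.succ Fin.castSucc).det * (A.submatrix Fin.castSucc Fin.succ).det := by
  -- `charmatrix (-A) = X • 1 + A` has monic, hence cancellable, determinant; then set `X = 0`.
  have hgeneric :=
    (charpoly_monic (-A)).isRegular.left (det_mul_desnanot_jacobi (charmatrix (-A)))
  have heval : (charmatrix (-A)).map (Polynomial.evalRingHom 0) = A := by
    ext i j
    by_cases hij : i = j
    · subst hij; simp [charmatrix_apply_eq]
    · simp [charmatrix_apply_ne _ _ _ hij]
  simpa only [_root_.map_mul, map_sub, RingHom.map_det, RingHom.mapMatrix_apply,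
    ← submatrix_map, heval] using congrArg (Polynomial.evalRingHom 0) hgeneric

def hankel {α : Type*} (a : ℕ → α) (n k : ℕ) : Matrix (Fin n) (Fin n) α :=
  of fun i j => a (i + j + k)

theorem submatrix_hankel {α : Type*} (a : ℕ → α) (k : ℕ) {m n : ℕ} (f g : Fin m → Fin n)
    (r s : ℕ) (hf : ∀ i, (f i : ℕ) = i + r) (hg : ∀ j, (g j : ℕ) = j + s) :
    (hankel a n k).submatrix f g = hankel a m (k + r + s) := by
  ext i j
  simp only [hankel, submatrix_apply, of_apply, hf, hg]
  ring_nf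

theorem det_hankel_recurrence (a : ℕ → R) (n k : ℕ) :
    (hankel a (n + 2) k).det * (hankel a n (k + 2)).det =
      (hankel a (n + 1) (k + 2)).det * (hankel a (n + 1) k).det -
        (hankel a (n + 1) (k + 1)).det ^ 2 := by
  have h := desnanot_jacobi (hankel a (n + 2) k)
  rw [submatrix_hankel a k (Fin.succ ∘ Fin.castSucc) (Fin.succ ∘ Fin.castSucc) 1 1
      (fun _ => rfl) (fun _ => rfl),
    submatrix_hankel a k Fin.succ Fin.succ 1 1 (fun _ => rfl) (fun _ => rfl),
    submatrix_hankel a k Fin.castSucc Fin.castSucc 0 0 (fun _ => rfl) (fun _ => rfl),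
    submatrix_hankel a k Fin.succ Fin.castSucc 1 0 (fun _ => rfl) (fun _ => rfl),
    submatrix_hankel a k Fin.castSucc Fin.succ 0 1 (fun _ => rfl) (fun _ => rfl)] at h
  linear_combination h

end Matrix

open Matrix

theorem add_two_mul_catalan_succ (n : ℕ) :
    (n + 2) * catalan (n + 1) = 2 * (2 * n + 1) * catalan n := by
  apply Nat.eq_of_mul_eq_mul_left n.succ_pos
  calc (n + 1) * ((n + 2) * catalan (n + 1)) = (n + 1) * centralBinom (n + 1) := by
        rw [← succ_mul_catalan_eq_centralBinom]
    _ = 2 * (2 * n + 1) * centralBinom n := succ_mul_centralBinom_succ n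
    _ = (n + 1) * (2 * (2 * n + 1) * catalan n) := by
        rw [← succ_mul_catalan_eq_centralBinom]; ring

theorem prod_Icc_natCast_add (c j : ℕ) : ∏ i ∈ Icc 1 j, ((i : ℚ) + c) = (c + j)! / c ! := by
  induction j with
  | zero => simp [(factorial_pos c).ne']
  | succ j ih =>
    rw [prod_Icc_succ_top (by omega), ih, ← add_assoc, factorial_succ]
    push_cast
    field_simp
    ring

/-- The inner product `∏_{i=1}^{j} (i + j + 2n) / (i + j)` of the formula, in closed form. -/
def catalanHankelFactor (n j : ℕ) : ℚ := (2 * n + 2 * j)! * j ! / ((2 * n + j)! * (2 * j)!)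

def catalanHankelProd (n k : ℕ) : ℚ := ∏ j ∈ range k, catalanHankelFactor n j

theorem catalanHankelFactor_zero_right (n : ℕ) : catalanHankelFactor n 0 = 1 := by
  simp [catalanHankelFactor, (factorial_pos _).ne']

theorem catalanHankelFactor_zero_left (j : ℕ) : catalanHankelFactor 0 j = 1 := by
  rw [catalanHankelFactor, mul_zero, zero_add, zero_add, mul_comm]
  exact div_self (by positivity)

theorem catalanHankelFactor_ne_zero (n j : ℕ) : catalanHankelFactor n j ≠ 0 := by
  unfold catalanHankelFactor; positivity

theorem catalanHankelFactor_succ_left (n j : ℕ) :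
    catalanHankelFactor (n + 1) j * ((2 * n + j + 1) * (2 * n + j + 2)) =
      catalanHankelFactor n j * ((2 * n + 2 * j + 1) * (2 * n + 2 * j + 2)) := by
  rw [catalanHankelFactor, catalanHankelFactor,
    show 2 * (n + 1) + 2 * j = 2 * n + 2 * j + 1 + 1 by ring,
    show 2 * (n + 1) + j = 2 * n + j + 1 + 1 by ring, factorial_succ, factorial_succ,
    factorial_succ (2 * n + j + 1), factorial_succ (2 * n + j)]
  push_cast
  field_simp
  ring

theorem catalanHankelFactor_succ_right (n j : ℕ) :
    catalanHankelFactor n (j + 1) * (2 * (2 * n + j + 1) * (2 * j + 1)) =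
      catalanHankelFactor n j * ((2 * n + 2 * j + 1) * (2 * n + 2 * j + 2)) := by
  rw [catalanHankelFactor, catalanHankelFactor,
    show 2 * n + 2 * (j + 1) = 2 * n + 2 * j + 1 + 1 by ring,
    show 2 * (j + 1) = 2 * j + 1 + 1 by ring, show 2 * n + (j + 1) = 2 * n + j + 1 by ring,
    factorial_succ, factorial_succ (2 * n + 2 * j), factorial_succ (2 * j + 1),
    factorial_succ (2 * j), factorial_succ j, factorial_succ (2 * n + j)]
  push_cast
  field_simp
  ring

theorem prod_Icc_Icc_eq_catalanHankelProd (n k : ℕ) :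
    ∏ j ∈ Icc 1 (k - 1), ∏ i ∈ Icc 1 j, ((i : ℚ) + j + 2 * n) / ((i : ℚ) + j) =
      catalanHankelProd n k := by
  have hfactor : ∀ j : ℕ, ∏ i ∈ Icc 1 j, ((i : ℚ) + j + 2 * n) / ((i : ℚ) + j) =
      catalanHankelFactor n j := by
    intro j
    have hnum := prod_Icc_natCast_add (j + 2 * n) j
    have hden := prod_Icc_natCast_add j j
    push_cast at hnum hden
    simp_rw [prod_div_distrib, add_assoc, hnum, hden, catalanHankelFactor]
    rw [show j + 2 * n + j = 2 * n + 2 * j by ring, show j + 2 * n = 2 * n + j by ring, ← two_mul]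
    field_simp
  rcases k with _ | k
  · simp [catalanHankelProd]
  · rw [catalanHankelProd, prod_range_succ', ← Ico_add_one_right_eq_Icc, prod_Ico_eq_prod_range]
    simp only [hfactor, add_tsub_cancel_right, add_comm 1, catalanHankelFactor_zero_right, mul_one]

theorem catalanHankelProd_ne_zero (n k : ℕ) : catalanHankelProd n k ≠ 0 :=
  prod_ne_zero_iff.2 fun j _ => catalanHankelFactor_ne_zero n j

theorem catalanHankelProd_succ_right (n k : ℕ) :
    catalanHankelProd n (k + 1) = catalanHankelProd n k * catalanHankelFactor n k :=
  prod_range_succ _ _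

theorem catalanHankelProd_zero_left (k : ℕ) : catalanHankelProd 0 k = 1 :=
  prod_eq_one fun j _ => catalanHankelFactor_zero_left j

theorem catalanHankelProd_one_left (k : ℕ) : catalanHankelProd 1 k = catalan k := by
  induction k with
  | zero => simp [catalanHankelProd]
  | succ k ih =>
    have hcat : ((k + 2) * catalan (k + 1) : ℚ) = 2 * (2 * k + 1) * catalan k := by
      exact_mod_cast add_two_mul_catalan_succ k
    have hfac := catalanHankelFactor_succ_left 0 k
    simp only [catalanHankelFactor_zero_left, zero_add, CharP.cast_eq_zero, mul_zero,
      one_mul] at hfac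
    rw [catalanHankelProd_succ_right, ih]
    apply mul_left_cancel₀ (show ((k : ℚ) + 1) * (k + 2) ≠ 0 by positivity)
    linear_combination (catalan k : ℚ) * hfac - ((k : ℚ) + 1) * hcat

theorem catalanHankelProd_add_two_left_mul (n k : ℕ) :
    catalanHankelProd (n + 2) k * catalanHankelProd n k *
        ((2 * n + k + 1) * (2 * n + k + 2) ^ 2 * (2 * n + k + 3)) =
      catalanHankelProd (n + 1) k ^ 2 *
        ((2 * n + 2 * k + 1) * (2 * n + 2 * k + 2) * (2 * n + 2) * (2 * n + 3)) := by
  induction k with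
  | zero => simp only [catalanHankelProd, prod_range_zero]; ring
  | succ k ih =>
    have hleft₂ := catalanHankelFactor_succ_left (n + 1) k
    have hleft₀ := catalanHankelFactor_succ_left n k
    push_cast at hleft₂ ih ⊢
    simp only [catalanHankelProd_succ_right]
    rw [← eq_div_iff (by positivity)] at hleft₂
    rw [eq_comm, ← eq_div_iff (by positivity)] at hleft₀
    rw [← eq_div_iff (by positivity), ← eq_div_iff (catalanHankelProd_ne_zero n k)] at ih
    have hP0 := catalanHankelProd_ne_zero n k
    rw [hleft₂, hleft₀, ih]
    field_simp
    ring

theorem catalanHankelProd_recurrence (n k : ℕ) :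
    catalanHankelProd (n + 2) k * catalanHankelProd n (k + 2) =
      catalanHankelProd (n + 1) (k + 2) * catalanHankelProd (n + 1) k -
        catalanHankelProd (n + 1) (k + 1) ^ 2 := by
  have hratio := catalanHankelProd_add_two_left_mul n k
  have hleft := catalanHankelFactor_succ_left n k
  have hright := catalanHankelFactor_succ_right n k
  have hright' := catalanHankelFactor_succ_right (n + 1) k
  push_cast at hright'
  rw [← eq_div_iff (by positivity), ← eq_div_iff (catalanHankelProd_ne_zero n k)] at hratio
  rw [eq_comm, ← eq_div_iff (by positivity)] at hleft
  rw [← eq_div_iff (by positivity)] at hright hright'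
  have hP0 := catalanHankelProd_ne_zero n k
  simp only [catalanHankelProd_succ_right]
  rw [hratio, hright, hright', hleft]
  field_simp
  ring

theorem det_hankel_catalan (n k : ℕ) :
    (hankel (fun m => (catalan m : ℚ)) n k).det = catalanHankelProd n k := by
  induction n using Nat.twoStepInduction generalizing k with
  | zero => rw [det_fin_zero, catalanHankelProd_zero_left]
  | one => simp [hankel, catalanHankelProd_one_left]
  | more n ih0 ih1 =>
    have h := det_hankel_recurrence (fun m => (catalan m : ℚ)) n k
    rw [ih0, ih1, ih1, ih1, ← catalanHankelProd_recurrence] at h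
    exact mul_right_cancel₀ (catalanHankelProd_ne_zero n (k + 2)) h

theorem stmt10 (n : ℕ) :
    (∀ k : ℕ,
      (Matrix.of fun i j : Fin n => (catalan ((i : ℕ) + (j : ℕ) + k) : ℚ)).det =
        ∏ j ∈ Finset.Icc 1 (k - 1), ∏ i ∈ Finset.Icc 1 j,
          ((i : ℚ) + j + 2 * n) / ((i : ℚ) + j)) ∧
    (Matrix.of fun i j : Fin n => (catalan ((i : ℕ) + (j : ℕ)) : ℚ)).det = 1 ∧
    (Matrix.of fun i j : Fin n => (catalan ((i : ℕ) + (j : ℕ) + 1) : ℚ)).det = 1 := by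
  refine ⟨fun k => (det_hankel_catalan n k).trans (prod_Icc_Icc_eq_catalanHankelProd n k).symm,
    ?_, ?_⟩
  · simpa [hankel, catalanHankelProd] using det_hankel_catalan n 0
  · simpa [hankel, catalanHankelProd, catalanHankelFactor_zero_right] using det_hankel_catalan n 1
end

section
/- For nonnegative integers $j \ge 0$ and $n \ge 1$, $\prod_{i=1}^{n} \frac{4(i+j)-2}{i+j+n} = \prod_{i=1}^{j} \frac{i+j+2n}{i+j}$ (as rational numbers, with the right side an empty product equal to $1$ when $j = 0$). -/
open Finset

private lemma prodShift (c : ℕ) : ∀ m : ℕ, ∏ i ∈ Finset.Icc 1 m, ((i : ℚ) + c) =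
    (Nat.factorial (c + m)) / (Nat.factorial c) := by
  intro m
  induction m with
  | zero => simp [div_self, Nat.factorial_ne_zero]
  | succ m ih =>
      rw [Finset.prod_Icc_succ_top (by omega), ih]
      have h1 : (Nat.factorial c : ℚ) ≠ 0 := by positivity
      rw [show c + (m + 1) = (c + m) + 1 by ring, Nat.factorial_succ]
      field_simp
      push_cast
      ring

private lemma prodOdd (j : ℕ) : ∀ n : ℕ, ∏ i ∈ Finset.Icc 1 n, (4 * ((i : ℚ) + j) - 2) =
    (Nat.factorial (2 * j + 2 * n)) * (Nat.factorial j) /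
      ((Nat.factorial (j + n)) * (Nat.factorial (2 * j))) := by
  intro n
  induction n with
  | zero => simp [Nat.two_mul, Nat.factorial_ne_zero, mul_comm]
  | succ n ih =>
      rw [Finset.prod_Icc_succ_top (by omega), ih]
      have e1 : 2 * j + 2 * (n + 1) = (2 * j + 2 * n) + 1 + 1 := by ring
      have e2 : j + (n + 1) = (j + n) + 1 := by ring
      rw [e1, e2, Nat.factorial_succ ((2*j+2*n)+1), Nat.factorial_succ (2*j+2*n),
        Nat.factorial_succ (j+n)]
      have h1 : (Nat.factorial (j + n) : ℚ) ≠ 0 := by positivity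
      have h2 : (Nat.factorial (2 * j) : ℚ) ≠ 0 := by positivity
      field_simp
      push_cast
      ring

theorem stmt12 (j n : ℕ) (hn : 1 ≤ n) :
    ∏ i ∈ Finset.Icc 1 n, (4 * ((i : ℚ) + j) - 2) / ((i : ℚ) + j + n) =
      ∏ i ∈ Finset.Icc 1 j, ((i : ℚ) + j + 2 * n) / ((i : ℚ) + j) := by
  rw [Finset.prod_div_distrib, Finset.prod_div_distrib]
  have hA := prodOdd j n
  have hB : ∏ i ∈ Finset.Icc 1 n, ((i : ℚ) + j + n) =
      (Nat.factorial (j + n + n)) / (Nat.factorial (j + n)) := by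
    rw [← prodShift (j + n) n]
    apply Finset.prod_congr rfl
    intro i _
    push_cast
    ring
  have hC : ∏ i ∈ Finset.Icc 1 j, ((i : ℚ) + j + 2 * n) =
      (Nat.factorial (j + 2 * n + j)) / (Nat.factorial (j + 2 * n)) := by
    rw [← prodShift (j + 2 * n) j]
    apply Finset.prod_congr rfl
    intro i _
    push_cast
    ring
  have hD : ∏ i ∈ Finset.Icc 1 j, ((i : ℚ) + j) =
      (Nat.factorial (j + j)) / (Nat.factorial j) := by
    rw [← prodShift j j]
  rw [hA, hB, hC, hD]
  have e1 : 2 * j + 2 * n = j + 2 * n + j := by ring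
  have e2 : j + n + n = j + 2 * n := by ring
  have e3 : 2 * j = j + j := by ring
  rw [e1, e2, e3]
  have h1 : (Nat.factorial (j + n) : ℚ) ≠ 0 := by positivity
  have h2 : (Nat.factorial (j + j) : ℚ) ≠ 0 := by positivity
  have h3 : (Nat.factorial (j + 2 * n) : ℚ) ≠ 0 := by positivity
  have h4 : (Nat.factorial (j + 2 * n + j) : ℚ) ≠ 0 := by positivity
  have h5 : (Nat.factorial j : ℚ) ≠ 0 := by positivity
  field_simp
end
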